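/- arXiv:2006.01766 — 8 statements merged into one kernel-verified Lean document; each statement's English description precedes it below -/
import Mathlib

section
/- Let μ be a Borel probability measure on ℝ that is absolutely continuous on the interval I = (x₀−η, x₀+η) for some x₀ ∈ ℝ and η > 0, with density ρ on I satisfying ρ ∈ C^{0,α}(I) for some 0 ≤ α < 1. Let μ^ε denote the Poisson-smoothed measure. Then |ρ(x₀) − μ^ε(x₀)| = O(ε^α) as ε ↓ 0; that is, there exist constants C > 0 and ε₀ > 0 such that |ρ(x₀) − μ^ε(x₀)| ≤ C ε^α for all 0 < ε < ε₀. -/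
/-!
With `P(t) = ε / (ε² + t²)` and `∫ P = π`, the error `π (ρ(x₀) - μ^ε(x₀))` equals
`∫ P(x₀ - y) (ρ(x₀) - 1_I ρ(y)) dy - ∫_{Iᶜ} P(x₀ - y) dμ(y)`. Hölder continuity on `I`, and
`ρ(x₀) ≤ ρ(x₀) (|x₀ - y| / η)^α` off `I`, bound `|ρ(x₀) - 1_I ρ(y)|` by a constant times
`|x₀ - y|^α`; the substitution `t = ε s` turns `∫ P(t) |t|^α dt` into
`ε^α ∫ |s|^α / (1 + s²) ds`, which is finite because `α < 1`. On `Iᶜ` the kernel is at most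
`ε / η² ≤ ε^α`, and `μ` has mass at most one.
-/

open MeasureTheory Real Set

/-- The Poisson-smoothed measure `μ^ε(x) = (1/π) ∫ ε/(ε²+(x−y)²) dμ(y)`. -/
noncomputable def poissonSmooth (μ : Measure ℝ) (ε x : ℝ) : ℝ :=
  (1 / π) * ∫ y, ε / (ε ^ 2 + (x - y) ^ 2) ∂μ

/-- `μ` is absolutely continuous on `I` with (nonnegative) density `ρ ∈ L¹(I)`. -/
def ACOnWithDensity (μ : Measure ℝ) (I : Set ℝ) (ρ : ℝ → ℝ) : Prop :=
  (∀ y ∈ I, 0 ≤ ρ y) ∧ IntegrableOn ρ I volume ∧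
    μ.restrict I = (volume.restrict I).withDensity (fun y => ENNReal.ofReal (ρ y))

/-- `h` is `α`-Hölder continuous on `I`. -/
def HolderOn (α : ℝ) (I : Set ℝ) (h : ℝ → ℝ) : Prop :=
  ∃ C : ℝ, 0 ≤ C ∧ ∀ x ∈ I, ∀ y ∈ I, |h x - h y| ≤ C * |x - y| ^ α

lemma rpow_abs_div_one_add_sq_le {α : ℝ} (hα : 0 ≤ α) (s : ℝ) :
    |s| ^ α / (1 + s ^ 2) ≤ (1 + ‖s‖ ^ 2) ^ (-(2 - α) / 2) := by
  have hpos : 0 < 1 + s ^ 2 := by positivity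
  have habs : |s| ≤ (1 + s ^ 2) ^ (1 / (2 : ℝ)) := by
    rw [← sqrt_eq_rpow]; exact abs_le_sqrt (by linarith)
  calc |s| ^ α / (1 + s ^ 2) ≤ ((1 + s ^ 2) ^ (1 / (2 : ℝ))) ^ α / (1 + s ^ 2) := by
        gcongr
    _ = (1 + ‖s‖ ^ 2) ^ (-(2 - α) / 2) := by
        rw [← rpow_mul hpos.le, Real.norm_eq_abs, sq_abs, ← rpow_sub_one hpos.ne']
        ring_nf

lemma integrable_rpow_abs_div_one_add_sq {α : ℝ} (hα0 : 0 ≤ α) (hα1 : α < 1) :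
    Integrable fun s : ℝ => |s| ^ α / (1 + s ^ 2) := by
  refine (integrable_rpow_neg_one_add_norm_sq (E := ℝ) (r := 2 - α) ?_).mono' ?_
    (.of_forall fun s => ?_)
  · simp only [Module.finrank_self, Nat.cast_one]; linarith
  · exact Measurable.aestronglyMeasurable (by fun_prop)
  · rw [Real.norm_of_nonneg (by positivity)]
    exact rpow_abs_div_one_add_sq_le hα0 s

lemma mul_rpow_abs_div_sq_add_sq_eq {ε : ℝ} (hε : 0 < ε) (α t : ℝ) :
    ε * |t| ^ α / (ε ^ 2 + t ^ 2) = ε ^ (α - 1) * (|t / ε| ^ α / (1 + (t / ε) ^ 2)) := by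
  rw [abs_div, abs_of_pos hε, div_rpow (abs_nonneg t) hε.le, rpow_sub_one hε.ne']
  field_simp

lemma integral_mul_rpow_abs_div_sq_add_sq {ε : ℝ} (hε : 0 < ε) (α : ℝ) :
    ∫ t, ε * |t| ^ α / (ε ^ 2 + t ^ 2) = ε ^ α * ∫ s, |s| ^ α / (1 + s ^ 2) := by
  simp_rw [mul_rpow_abs_div_sq_add_sq_eq hε α]
  rw [integral_const_mul, Measure.integral_comp_div (fun s => |s| ^ α / (1 + s ^ 2)),
    abs_of_pos hε, smul_eq_mul, ← mul_assoc, rpow_sub_one hε.ne', div_mul_cancel₀ _ hε.ne']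

lemma integrable_mul_rpow_abs_div_sq_add_sq {ε α : ℝ} (hε : 0 < ε) (hα0 : 0 ≤ α) (hα1 : α < 1) :
    Integrable fun t : ℝ => ε * |t| ^ α / (ε ^ 2 + t ^ 2) := by
  simp_rw [mul_rpow_abs_div_sq_add_sq_eq hε α]
  exact ((integrable_rpow_abs_div_one_add_sq hα0 hα1).comp_div hε.ne').const_mul _

lemma integral_univ_div_sq_add_sq {ε : ℝ} (hε : 0 < ε) : ∫ t, ε / (ε ^ 2 + t ^ 2) = π := by
  simpa [← integral_univ_inv_one_add_sq] using integral_mul_rpow_abs_div_sq_add_sq hε 0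

lemma integrable_div_sq_add_sq {ε : ℝ} (hε : 0 < ε) :
    Integrable fun t : ℝ => ε / (ε ^ 2 + t ^ 2) := by
  simpa using integrable_mul_rpow_abs_div_sq_add_sq hε le_rfl one_pos

lemma norm_div_sq_add_sq_le_inv {ε : ℝ} (hε : 0 < ε) (t : ℝ) : ‖ε / (ε ^ 2 + t ^ 2)‖ ≤ ε⁻¹ := by
  rw [Real.norm_of_nonneg (by positivity), ← div_self_mul_self', ← sq]
  gcongr
  nlinarith

lemma integrable_div_sq_add_sub_sq (μ : Measure ℝ) [IsFiniteMeasure μ] {ε : ℝ} (hε : 0 < ε)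
    (x₀ : ℝ) : Integrable (fun y => ε / (ε ^ 2 + (x₀ - y) ^ 2)) μ :=
  (integrable_const ε⁻¹).mono' (Measurable.aestronglyMeasurable (by fun_prop))
    (.of_forall fun y => norm_div_sq_add_sq_le_inv hε (x₀ - y))

lemma setIntegral_eq_setIntegral_mul_of_acOnWithDensity {μ : Measure ℝ} {I : Set ℝ}
    {ρ : ℝ → ℝ} (hac : ACOnWithDensity μ I ρ) (hI : MeasurableSet I) (f : ℝ → ℝ) :
    ∫ y in I, f y ∂μ = ∫ y in I, f y * ρ y := by
  obtain ⟨hρ0, hρint, hμI⟩ := hac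
  rw [hμI, integral_withDensity_eq_integral_toReal_smul₀
    hρint.aemeasurable.ennreal_ofReal (.of_forall fun _ => ENNReal.ofReal_lt_top)]
  refine setIntegral_congr_fun hI fun y hy => ?_
  rw [ENNReal.toReal_ofReal (hρ0 y hy), smul_eq_mul, mul_comm]

lemma le_abs_sub_of_notMem_Ioo {x₀ η y : ℝ} (hy : y ∉ Ioo (x₀ - η) (x₀ + η)) :
    η ≤ |x₀ - y| := by
  rw [mem_Ioo, not_and_or, not_lt, not_lt] at hy
  rw [le_abs]
  rcases hy with hy | hy
  · left; linarith
  · right; linarith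

lemma abs_sub_indicator_le_of_holderAt {ρ : ℝ → ℝ} {x₀ η α CH : ℝ} (hη : 0 < η) (hα : 0 ≤ α)
    (hCH : 0 ≤ CH) (hρx₀ : 0 ≤ ρ x₀)
    (hH : ∀ y ∈ Ioo (x₀ - η) (x₀ + η), |ρ x₀ - ρ y| ≤ CH * |x₀ - y| ^ α) (y : ℝ) :
    |ρ x₀ - (Ioo (x₀ - η) (x₀ + η)).indicator ρ y| ≤ (CH + ρ x₀ * η ^ (-α)) * |x₀ - y| ^ α := by
  by_cases hy : y ∈ Ioo (x₀ - η) (x₀ + η)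
  · rw [indicator_of_mem hy]
    have : 0 ≤ ρ x₀ * η ^ (-α) * |x₀ - y| ^ α := by positivity
    linarith [hH y hy]
  · have hηy : η ^ α ≤ |x₀ - y| ^ α := by gcongr; exact le_abs_sub_of_notMem_Ioo hy
    have : ρ x₀ ≤ ρ x₀ * η ^ (-α) * |x₀ - y| ^ α := by
      rw [rpow_neg hη.le, mul_assoc, inv_mul_eq_div]
      exact le_mul_of_one_le_right hρx₀ ((one_le_div (by positivity)).mpr hηy)
    rw [indicator_of_notMem hy, sub_zero, abs_of_nonneg hρx₀]
    have : 0 ≤ CH * |x₀ - y| ^ α := by positivity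
    linarith

lemma pi_mul_sub_poissonSmooth_eq {μ : Measure ℝ} [IsFiniteMeasure μ] {I : Set ℝ} {ρ : ℝ → ℝ}
    (hac : ACOnWithDensity μ I ρ) (hI : MeasurableSet I) {ε : ℝ} (hε : 0 < ε) (x₀ : ℝ) :
    π * (ρ x₀ - poissonSmooth μ ε x₀) =
      (∫ y, ε / (ε ^ 2 + (x₀ - y) ^ 2) * (ρ x₀ - I.indicator ρ y)) -
        ∫ y in Iᶜ, ε / (ε ^ 2 + (x₀ - y) ^ 2) ∂μ := by
  set f : ℝ → ℝ := fun y => ε / (ε ^ 2 + (x₀ - y) ^ 2)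
  have hf_int : ∫ y, f y = π :=
    (integral_sub_left_eq_self (fun t => ε / (ε ^ 2 + t ^ 2)) volume x₀).trans
      (integral_univ_div_sq_add_sq hε)
  have hfρ : Integrable (fun y => f y * I.indicator ρ y) :=
    (hac.2.1.integrable_indicator hI).bdd_mul (Measurable.aestronglyMeasurable (by fun_prop))
      (.of_forall fun y => norm_div_sq_add_sq_le_inv hε (x₀ - y))
  have hμ : ∫ y, f y ∂μ = (∫ y, f y * I.indicator ρ y) + ∫ y in Iᶜ, f y ∂μ := by
    rw [← integral_add_compl hI (integrable_div_sq_add_sub_sq μ hε x₀),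
      setIntegral_eq_setIntegral_mul_of_acOnWithDensity hac hI, ← integral_indicator hI]
    simp only [indicator_mul_right]
    rfl
  rw [poissonSmooth, mul_sub, ← mul_assoc, mul_one_div_cancel pi_pos.ne', one_mul, hμ,
    ← hf_int, ← integral_mul_const, sub_add_eq_sub_sub,
    ← integral_sub ((integrable_div_sq_add_sq hε).comp_sub_left x₀ |>.mul_const _) hfρ]
  simp only [f, mul_sub]

lemma abs_integral_div_sq_add_sub_sq_mul_le {ε α M x₀ : ℝ} (hε : 0 < ε) (hα0 : 0 ≤ α)
    (hα1 : α < 1) {g : ℝ → ℝ} (hg : ∀ y, |g y| ≤ M * |x₀ - y| ^ α) :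
    |∫ y, ε / (ε ^ 2 + (x₀ - y) ^ 2) * g y| ≤ M * (ε ^ α * ∫ s, |s| ^ α / (1 + s ^ 2)) := by
  have hG := (integrable_mul_rpow_abs_div_sq_add_sq hε hα0 hα1).comp_sub_left x₀
  refine (norm_integral_le_of_norm_le (hG.const_mul M)
    (f := fun y => ε / (ε ^ 2 + (x₀ - y) ^ 2) * g y) (.of_forall fun y => ?_)).trans_eq ?_
  · rw [Real.norm_eq_abs, abs_mul, abs_of_nonneg (by positivity)]
    calc ε / (ε ^ 2 + (x₀ - y) ^ 2) * |g y|
        ≤ ε / (ε ^ 2 + (x₀ - y) ^ 2) * (M * |x₀ - y| ^ α) := by gcongr; exact hg y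
      _ = M * (ε * |x₀ - y| ^ α / (ε ^ 2 + (x₀ - y) ^ 2)) := by ring
  · rw [integral_const_mul,
      integral_sub_left_eq_self (fun t => ε * |t| ^ α / (ε ^ 2 + t ^ 2)) volume x₀,
      integral_mul_rpow_abs_div_sq_add_sq hε]

lemma abs_setIntegral_compl_Ioo_div_sq_add_sub_sq_le (μ : Measure ℝ) [IsProbabilityMeasure μ]
    {ε x₀ η : ℝ} (hε : 0 ≤ ε) (hη : 0 < η) :
    |∫ y in (Ioo (x₀ - η) (x₀ + η))ᶜ, ε / (ε ^ 2 + (x₀ - y) ^ 2) ∂μ| ≤ ε / η ^ 2 := by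
  have hbound : ∀ y ∈ (Ioo (x₀ - η) (x₀ + η))ᶜ, ‖ε / (ε ^ 2 + (x₀ - y) ^ 2)‖ ≤ ε / η ^ 2 := by
    intro y hy
    have hηy : η ^ 2 ≤ (x₀ - y) ^ 2 := by
      rw [← sq_abs (x₀ - y)]; gcongr; exact le_abs_sub_of_notMem_Ioo hy
    rw [Real.norm_of_nonneg (by positivity)]
    gcongr
    nlinarith
  calc |∫ y in (Ioo (x₀ - η) (x₀ + η))ᶜ, ε / (ε ^ 2 + (x₀ - y) ^ 2) ∂μ|
        ≤ ε / η ^ 2 * μ.real (Ioo (x₀ - η) (x₀ + η))ᶜ :=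
        norm_setIntegral_le_of_norm_le_const (measure_lt_top _ _) hbound
    _ ≤ ε / η ^ 2 := mul_le_of_le_one_right (by positivity) measureReal_le_one

/-- If `μ` is a Borel probability measure on `ℝ`, absolutely continuous on
`I = (x₀−η, x₀+η)` with density `ρ ∈ C^{0,α}(I)` for some `0 ≤ α < 1`, then the
Poisson-smoothed measure satisfies `|ρ(x₀) − μ^ε(x₀)| = O(ε^α)` as `ε ↓ 0`. -/
theorem stmt_0 (μ : Measure ℝ) [IsProbabilityMeasure μ] (x₀ η α : ℝ) (hη : 0 < η)
    (hα0 : 0 ≤ α) (hα1 : α < 1) (ρ : ℝ → ℝ)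
    (hac : ACOnWithDensity μ (Ioo (x₀ - η) (x₀ + η)) ρ)
    (hhold : HolderOn α (Ioo (x₀ - η) (x₀ + η)) ρ) :
    ∃ C > (0 : ℝ), ∃ ε₀ > (0 : ℝ), ∀ ε : ℝ, 0 < ε → ε < ε₀ →
      |ρ x₀ - poissonSmooth μ ε x₀| ≤ C * ε ^ α := by
  obtain ⟨CH, hCH0, hCH⟩ := hhold
  have hx₀ : x₀ ∈ Ioo (x₀ - η) (x₀ + η) := ⟨by linarith, by linarith⟩
  have hρx₀ : 0 ≤ ρ x₀ := hac.1 x₀ hx₀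
  set J := ∫ s : ℝ, |s| ^ α / (1 + s ^ 2)
  set M := CH + ρ x₀ * η ^ (-α)
  have hJ : 0 ≤ J := integral_nonneg fun s => by positivity
  have hM : 0 ≤ M := by positivity
  refine ⟨(M * J + 1 / η ^ 2) / π, by positivity, 1, one_pos, fun ε hε hε1 => ?_⟩
  have hεα : ε ≤ ε ^ α := by
    simpa using rpow_le_rpow_of_exponent_ge hε hε1.le hα1.le
  have hmain := abs_integral_div_sq_add_sub_sq_mul_le hε hα0 hα1
    (abs_sub_indicator_le_of_holderAt hη hα0 hCH0 hρx₀ (hCH x₀ hx₀))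
  have htail := abs_setIntegral_compl_Ioo_div_sq_add_sub_sq_le μ (x₀ := x₀) hε.le hη
  calc |ρ x₀ - poissonSmooth μ ε x₀| = |π * (ρ x₀ - poissonSmooth μ ε x₀)| / π := by
        rw [abs_mul, abs_of_pos pi_pos, mul_div_cancel_left₀ _ pi_pos.ne']
    _ ≤ (M * (ε ^ α * J) + ε / η ^ 2) / π := by
        rw [pi_mul_sub_poissonSmooth_eq hac measurableSet_Ioo hε]
        gcongr
        exact (abs_sub _ _).trans (add_le_add hmain htail)
    _ ≤ (M * (ε ^ α * J) + ε ^ α / η ^ 2) / π := by gcongr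
    _ = (M * J + 1 / η ^ 2) / π * ε ^ α := by ring
end

section
/- Let m ≥ 1 and let K be an mth order kernel with constant C_K, and let K̂(ω) = ∫_ℝ K(x) e^{−2πixω} dx denote its Fourier transform. Then for any α ∈ (0,1): (a) K̂ is (m−1)-times continuously differentiable on ℝ and its (m−1)st derivative is α-Hölder continuous, i.e. K̂ ∈ C^{m−1,α}(ℝ); and (b) for every ω ∈ ℝ, |K̂(ω) − 1| ≤ (|K̂^{(m−1)}|_{C^{0,α}(ℝ)}/(m−1)!) · |ω|^{m−1+α}. -/
open MeasureTheory Real Set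

/-- `K` is an `m`th order kernel with decay constant `C_K`. -/
structure IsKernelOfOrder (m : ℕ) (CK : ℝ) (K : ℝ → ℝ) : Prop where
  integrable : Integrable K
  integral_one : (∫ x, K x) = 1
  moment_integrable : ∀ j : ℕ, 0 < j → j < m → Integrable (fun x => K x * x ^ j)
  moment_zero : ∀ j : ℕ, 0 < j → j < m → (∫ x, K x * x ^ j) = 0
  CK_pos : 0 < CK
  decay : ∀ x : ℝ, |K x| ≤ CK / (1 + |x|) ^ (m + 1)

/-- The Fourier transform `K̂(ω) = ∫ K(x) e^{−2πixω} dx`. -/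
noncomputable def fourierK (K : ℝ → ℝ) (ω : ℝ) : ℂ :=
  ∫ x : ℝ, (K x : ℂ) * Complex.exp (-(2 * Real.pi * Complex.I * x * ω))

/-- The global Hölder seminorm `|h|_{C^{0,α}(ℝ)}` of a complex-valued function,
realized as the least admissible Hölder constant. -/
noncomputable def holderSemiC (α : ℝ) (h : ℝ → ℂ) : ℝ :=
  sInf {C : ℝ | 0 ≤ C ∧ ∀ x y : ℝ, ‖h x - h y‖ ≤ C * |x - y| ^ α}

/-!
The `n`-th derivative of `K̂` is the Fourier transform of `(-2πix)ⁿ K(x)`, which is integrable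
for `n ≤ m - 1` thanks to the decay of `K`. Since
`|e^{ia} - e^{ib}| ≤ min 2 |a - b| ≤ 2^{1-α} |a - b|^α`, the `(m-1)`-st derivative is `α`-Hölder
as soon as `|x|^{m-1+α} K(x)` is integrable, i.e. for `α < 1`. The vanishing moments say that
`K̂(0) = 1` and `K̂^{(k)}(0) = 0` for `0 < k < m`, so integrating the Hölder bound of `K̂^{(m-1)}`
at `0` successively `m - 1` times yields the Taylor-type estimate.
-/

lemma min_le_rpow_mul_rpow {c t α : ℝ} (hc : 0 ≤ c) (ht : 0 ≤ t) (hα0 : 0 ≤ α) (hα1 : α ≤ 1) :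
    min c t ≤ c ^ (1 - α) * t ^ α := by
  have split : ∀ s : ℝ, 0 ≤ s → s = s ^ (1 - α) * s ^ α := fun s hs => by
    rw [← Real.rpow_add' hs (by norm_num), sub_add_cancel, Real.rpow_one]
  rcases le_total c t with hct | htc
  · calc min c t = c ^ (1 - α) * c ^ α := by rw [min_eq_left hct, ← split c hc]
      _ ≤ c ^ (1 - α) * t ^ α := by gcongr
  · calc min c t = t ^ (1 - α) * t ^ α := by rw [min_eq_right htc, ← split t ht]
      _ ≤ c ^ (1 - α) * t ^ α := by gcongr

lemma norm_exp_ofReal_mul_I_sub_exp_le (a b : ℝ) :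
    ‖Complex.exp (a * Complex.I) - Complex.exp (b * Complex.I)‖ ≤ min 2 |a - b| := by
  refine le_min ?_ ?_
  · calc _ ≤ ‖Complex.exp (a * Complex.I)‖ + ‖Complex.exp (b * Complex.I)‖ := norm_sub_le _ _
      _ = 2 := by rw [Complex.norm_exp_ofReal_mul_I, Complex.norm_exp_ofReal_mul_I]; norm_num
  · have factor : Complex.exp (a * Complex.I) - Complex.exp (b * Complex.I)
        = Complex.exp (b * Complex.I) * (Complex.exp (Complex.I * ↑(a - b)) - 1) := by
      rw [mul_sub, ← Complex.exp_add, mul_one]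
      push_cast
      ring_nf
    rw [factor, norm_mul, Complex.norm_exp_ofReal_mul_I, one_mul, ← Real.norm_eq_abs]
    exact Real.norm_exp_I_mul_ofReal_sub_one_le

open FourierTransform

theorem norm_fourier_sub_le {E : Type*} [NormedAddCommGroup E] [NormedSpace ℂ E]
    {f : ℝ → E} {α : ℝ} (hα0 : 0 ≤ α) (hα1 : α ≤ 1) (hf : Integrable f)
    (hαf : Integrable fun v => |v| ^ α * ‖f v‖) (x y : ℝ) :
    ‖𝓕 f x - 𝓕 f y‖ ≤ (2 ^ (1 - α) * (2 * π) ^ α * ∫ v, |v| ^ α * ‖f v‖) * |x - y| ^ α := by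
  have integrable_exp_smul : ∀ w : ℝ,
      Integrable fun v : ℝ => Complex.exp (↑(-2 * π * v * w) * Complex.I) • f v := fun w =>
    hf.norm.mono' (by fun_prop) (ae_of_all _ fun v => by
      rw [norm_smul, Complex.norm_exp_ofReal_mul_I, one_mul])
  have pointwise : ∀ v : ℝ,
      ‖(Complex.exp (↑(-2 * π * v * x) * Complex.I)
        - Complex.exp (↑(-2 * π * v * y) * Complex.I)) • f v‖
      ≤ (2 ^ (1 - α) * (2 * π) ^ α * |x - y| ^ α) * (|v| ^ α * ‖f v‖) := fun v => by
    have phase : |-2 * π * v * x - -2 * π * v * y| = 2 * π * |v| * |x - y| := by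
      rw [show -2 * π * v * x - -2 * π * v * y = (2 * π) * v * (y - x) by ring,
        abs_mul, abs_mul, abs_of_pos Real.two_pi_pos, abs_sub_comm]
    calc _ = ‖Complex.exp (↑(-2 * π * v * x) * Complex.I)
              - Complex.exp (↑(-2 * π * v * y) * Complex.I)‖ * ‖f v‖ := norm_smul _ _
      _ ≤ (2 ^ (1 - α) * (2 * π * |v| * |x - y|) ^ α) * ‖f v‖ := by
          gcongr
          rw [← phase]
          exact (norm_exp_ofReal_mul_I_sub_exp_le _ _).trans
            (min_le_rpow_mul_rpow zero_le_two (abs_nonneg _) hα0 hα1)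
      _ = _ := by
          rw [Real.mul_rpow (by positivity) (by positivity),
            Real.mul_rpow (by positivity) (by positivity)]
          ring
  rw [Real.fourier_real_eq_integral_exp_smul, Real.fourier_real_eq_integral_exp_smul,
    ← integral_sub (integrable_exp_smul x) (integrable_exp_smul y)]
  simp_rw [← sub_smul]
  calc _ ≤ ∫ v, (2 ^ (1 - α) * (2 * π) ^ α * |x - y| ^ α) * (|v| ^ α * ‖f v‖) :=
        norm_integral_le_of_norm_le (hαf.const_mul _) (ae_of_all _ pointwise)
    _ = _ := by rw [integral_const_mul]; ring

lemma norm_sub_le_holderSemiC {α : ℝ} {h : ℝ → ℂ}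
    (hh : ∃ C, 0 ≤ C ∧ ∀ x y : ℝ, ‖h x - h y‖ ≤ C * |x - y| ^ α) (x y : ℝ) :
    ‖h x - h y‖ ≤ holderSemiC α h * |x - y| ^ α := by
  have hH : 0 ≤ holderSemiC α h := Real.sInf_nonneg fun C hC => hC.1
  rcases eq_or_ne x y with rfl | hxy
  · rw [sub_self, norm_zero]
    positivity
  have hpos : 0 < |x - y| ^ α := Real.rpow_pos_of_pos (abs_pos.2 (sub_ne_zero.2 hxy)) α
  rw [← div_le_iff₀ hpos]
  exact le_csInf hh fun C hC => (div_le_iff₀ hpos).2 (hC.2 x y)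

section Taylor

variable {E : Type*} [NormedAddCommGroup E] [NormedSpace ℝ E] [CompleteSpace E]

lemma norm_sub_le_of_norm_deriv_le_rpow_of_nonneg {f f' : ℝ → E}
    (hf : ∀ t, HasDerivAt f (f' t) t) (hf' : Continuous f') {B p : ℝ} (hp : 0 ≤ p)
    (hB : ∀ t, ‖f' t‖ ≤ B * |t| ^ p) {ω : ℝ} (hω : 0 ≤ ω) :
    ‖f ω - f 0‖ ≤ B / (p + 1) * |ω| ^ (p + 1) := by
  rw [← intervalIntegral.integral_eq_sub_of_hasDerivAt (fun t _ => hf t)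
    (hf'.intervalIntegrable _ _)]
  calc ‖∫ t in (0:ℝ)..ω, f' t‖ ≤ ∫ t in (0:ℝ)..ω, ‖f' t‖ :=
        intervalIntegral.norm_integral_le_integral_norm hω
    _ ≤ ∫ t in (0:ℝ)..ω, B * t ^ p := by
        have hpow : Continuous fun t : ℝ => B * t ^ p :=
          continuous_const.mul (continuous_id.rpow_const fun _ => Or.inr hp)
        refine intervalIntegral.integral_mono_on hω (hf'.norm.intervalIntegrable _ _)
          (hpow.intervalIntegrable _ _) fun t ht => ?_
        simpa only [abs_of_nonneg ht.1] using hB t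
    _ = B / (p + 1) * |ω| ^ (p + 1) := by
        rw [intervalIntegral.integral_const_mul, integral_rpow (Or.inl (by linarith)),
          Real.zero_rpow (by linarith), abs_of_nonneg hω]
        ring

lemma norm_sub_le_of_norm_deriv_le_rpow {f f' : ℝ → E}
    (hf : ∀ t, HasDerivAt f (f' t) t) (hf' : Continuous f') {B p : ℝ} (hp : 0 ≤ p)
    (hB : ∀ t, ‖f' t‖ ≤ B * |t| ^ p) (ω : ℝ) :
    ‖f ω - f 0‖ ≤ B / (p + 1) * |ω| ^ (p + 1) := by
  rcases le_total 0 ω with hω | hω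
  · exact norm_sub_le_of_norm_deriv_le_rpow_of_nonneg hf hf' hp hB hω
  have hf_neg : ∀ t, HasDerivAt (fun s => f (-s)) (-f' (-t)) t := fun t => by
    simpa [Function.comp_def] using (hf (-t)).scomp t (hasDerivAt_neg t)
  simpa using norm_sub_le_of_norm_deriv_le_rpow_of_nonneg hf_neg (hf'.comp continuous_neg).neg
    hp (fun t => by simpa using hB (-t)) (neg_nonneg.2 hω)

theorem norm_sub_le_of_iteratedDeriv_sub_le {n : ℕ} {f : ℝ → E} (hf : ContDiff ℝ n f)
    (hzero : ∀ k, 0 < k → k ≤ n → iteratedDeriv k f 0 = 0) {H α : ℝ} (hα : 0 ≤ α)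
    (hH : ∀ t, ‖iteratedDeriv n f t - iteratedDeriv n f 0‖ ≤ H * |t| ^ α) (ω : ℝ) :
    ‖f ω - f 0‖ ≤ H / n.factorial * |ω| ^ ((n : ℝ) + α) := by
  induction n generalizing f ω with
  | zero => simpa using hH ω
  | succ n ih =>
    have hH0 : 0 ≤ H := by simpa using (norm_nonneg _).trans (hH 1)
    rw [Nat.cast_succ, contDiff_succ_iff_deriv] at hf
    have hzero' : ∀ k, 0 < k → k ≤ n → iteratedDeriv k (deriv f) 0 = 0 := fun k hk0 hk => by
      rw [← iteratedDeriv_succ']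
      exact hzero _ (by omega) (by omega)
    have hderiv0 : deriv f 0 = 0 := by simpa using hzero 1 one_pos (by omega)
    have hderiv : ∀ t, ‖deriv f t‖ ≤ H / n.factorial * |t| ^ ((n : ℝ) + α) := fun t => by
      have := ih hf.2.2 hzero' (by simpa only [iteratedDeriv_succ'] using hH) t
      rwa [hderiv0, sub_zero] at this
    refine (norm_sub_le_of_norm_deriv_le_rpow (fun t => (hf.1 t).hasDerivAt)
      hf.2.2.continuous (by positivity) hderiv ω).trans ?_
    -- integrating gains the factor `1 / (n + α + 1) ≤ 1 / (n + 1)`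
    rw [show (n : ℝ) + α + 1 = ((n + 1 : ℕ) : ℝ) + α by push_cast; ring, div_div]
    gcongr
    rw [Nat.factorial_succ, Nat.cast_mul, mul_comm]
    gcongr
    push_cast
    linarith

end Taylor

lemma integrable_abs_rpow_mul_of_le_div_pow {K : ℝ → ℝ} (hK : AEStronglyMeasurable K)
    {m : ℕ} {C p : ℝ} (hdecay : ∀ x, |K x| ≤ C / (1 + |x|) ^ (m + 1)) (hp0 : 0 ≤ p)
    (hpm : p < m) :
    Integrable fun x => |x| ^ p * |K x| := by
  have hdom : Integrable fun x : ℝ => C * (1 + ‖x‖) ^ (-((m : ℝ) + 1 - p)) :=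
    (integrable_one_add_norm (by simp only [Module.finrank_self, Nat.cast_one]; linarith)).const_mul
      C
  refine hdom.mono' ((continuous_abs.rpow_const fun _ => Or.inr hp0).aestronglyMeasurable.mul
    (continuous_abs.comp_aestronglyMeasurable hK)) (ae_of_all _ fun x => ?_)
  have h1x : 0 < 1 + |x| := by positivity
  rw [Real.norm_eq_abs, abs_of_nonneg (by positivity), Real.norm_eq_abs]
  calc |x| ^ p * |K x| ≤ (1 + |x|) ^ p * (C / (1 + |x|) ^ (m + 1)) := by
        gcongr ?_ * ?_
        · exact Real.rpow_le_rpow (abs_nonneg x) (by linarith) hp0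
        · exact hdecay x
    _ = C * (1 + |x|) ^ (-((m : ℝ) + 1 - p)) := by
        rw [← Real.rpow_natCast, div_eq_mul_inv, ← Real.rpow_neg h1x.le, mul_left_comm,
          ← Real.rpow_add h1x]
        push_cast
        ring_nf

lemma fourierK_eq_fourier (K : ℝ → ℝ) : fourierK K = 𝓕 (fun x : ℝ => (K x : ℂ)) := by
  ext ω
  rw [Real.fourier_real_eq_integral_exp_smul, fourierK]
  congr 1 with x
  rw [smul_eq_mul, mul_comm]
  push_cast
  ring_nf

namespace IsKernelOfOrder

variable {m : ℕ} {CK : ℝ} {K : ℝ → ℝ}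

lemma integrable_pow_smul (hK : IsKernelOfOrder m CK K) {n : ℕ} (hn : n ≤ m - 1) :
    Integrable fun x : ℝ => x ^ n • (K x : ℂ) := by
  rcases Nat.eq_zero_or_pos n with rfl | hn0
  · simpa using hK.integrable.ofReal (𝕜 := ℂ)
  · simpa [mul_comm] using (hK.moment_integrable n hn0 (by omega)).ofReal (𝕜 := ℂ)

lemma contDiff_fourierK (hK : IsKernelOfOrder m CK K) :
    ContDiff ℝ (m - 1 : ℕ) (fourierK K) := by
  rw [fourierK_eq_fourier]
  refine Real.contDiff_fourier fun n hn => ?_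
  simpa [norm_smul] using (hK.integrable_pow_smul (n := n) (by exact_mod_cast hn)).norm

lemma iteratedDeriv_fourierK (hK : IsKernelOfOrder m CK K) {n : ℕ} (hn : n ≤ m - 1) :
    iteratedDeriv n (fourierK K) = 𝓕 fun x : ℝ => (-2 * π * Complex.I * x) ^ n • (K x : ℂ) := by
  rw [fourierK_eq_fourier]
  exact Real.iteratedDeriv_fourier (N := (m - 1 : ℕ))
    (fun k hk => hK.integrable_pow_smul (by exact_mod_cast hk)) (by exact_mod_cast hn)

lemma iteratedDeriv_fourierK_zero (hK : IsKernelOfOrder m CK K) {n : ℕ} (hn0 : 0 < n)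
    (hn : n ≤ m - 1) : iteratedDeriv n (fourierK K) 0 = 0 := by
  rw [hK.iteratedDeriv_fourierK hn, Real.fourier_real_eq_integral_exp_smul]
  have hmoment : ∫ x, K x * x ^ n = 0 := hK.moment_zero n hn0 (by omega)
  simp_rw [mul_zero, Complex.ofReal_zero, zero_mul, Complex.exp_zero, one_smul, smul_eq_mul,
    mul_pow, mul_assoc, integral_const_mul]
  norm_cast
  simp [mul_comm, hmoment]

lemma fourierK_zero (hK : IsKernelOfOrder m CK K) : fourierK K 0 = 1 := by
  simp only [fourierK, Complex.ofReal_zero, mul_zero, neg_zero, Complex.exp_zero, mul_one]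
  rw [integral_complex_ofReal, hK.integral_one, Complex.ofReal_one]

lemma iteratedDeriv_fourierK_holder (hK : IsKernelOfOrder m CK K) (hm : 1 ≤ m) {α : ℝ}
    (hα0 : 0 ≤ α) (hα1 : α < 1) :
    ∃ C, 0 ≤ C ∧ ∀ x y : ℝ, ‖iteratedDeriv (m - 1) (fourierK K) x
      - iteratedDeriv (m - 1) (fourierK K) y‖ ≤ C * |x - y| ^ α := by
  set g : ℝ → ℂ := fun x => (-2 * π * Complex.I * x) ^ (m - 1) • (K x : ℂ)
  have hg : Integrable g := by
    refine ((hK.integrable_pow_smul le_rfl).const_mul ((-2 * π * Complex.I) ^ (m - 1))).congr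
      (ae_of_all _ fun x => ?_)
    simp only [g, smul_eq_mul, Complex.real_smul]
    push_cast
    ring
  have hnorm : ∀ v, |v| ^ α * ‖g v‖ = (2 * π) ^ (m - 1) * (|v| ^ ((m : ℝ) - 1 + α) * |K v|) :=
    fun v => by
      rw [show (m : ℝ) - 1 + α = α + (m - 1 : ℕ) by push_cast [hm]; ring,
        Real.rpow_add_of_nonneg (abs_nonneg v) hα0 (Nat.cast_nonneg _), Real.rpow_natCast]
      simp [g, abs_of_pos Real.pi_pos, mul_pow]
      ring
  have hαg : Integrable fun v => |v| ^ α * ‖g v‖ := by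
    have hm' : (1 : ℝ) ≤ m := by exact_mod_cast hm
    simp_rw [hnorm]
    exact (integrable_abs_rpow_mul_of_le_div_pow hK.integrable.aestronglyMeasurable hK.decay
      (by linarith) (by linarith)).const_mul _
  have hintegral_nonneg : 0 ≤ ∫ v, |v| ^ α * ‖g v‖ := integral_nonneg fun v => by positivity
  refine ⟨2 ^ (1 - α) * (2 * π) ^ α * ∫ v, |v| ^ α * ‖g v‖, by positivity, ?_⟩
  rw [hK.iteratedDeriv_fourierK le_rfl]
  exact norm_fourier_sub_le hα0 hα1.le hg hαg

end IsKernelOfOrder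

/-- Regularity of the Fourier transform of an `m`th order kernel: for every
`α ∈ (0,1)`, `K̂ ∈ C^{m−1,α}(ℝ)` and
`|K̂(ω) − 1| ≤ (|K̂^{(m−1)}|_{C^{0,α}}/(m−1)!)|ω|^{m−1+α}` for all `ω`. -/
theorem stmt_5 (m : ℕ) (hm : 1 ≤ m) (CK : ℝ) (K : ℝ → ℝ)
    (hK : IsKernelOfOrder m CK K) (α : ℝ) (hα0 : 0 < α) (hα1 : α < 1) :
    ContDiff ℝ (m - 1 : ℕ) (fourierK K) ∧
    (∃ C : ℝ, 0 ≤ C ∧ ∀ x y : ℝ,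
      ‖iteratedDeriv (m - 1) (fourierK K) x - iteratedDeriv (m - 1) (fourierK K) y‖
        ≤ C * |x - y| ^ α) ∧
    ∀ ω : ℝ, ‖fourierK K ω - 1‖ ≤
      holderSemiC α (iteratedDeriv (m - 1) (fourierK K)) / (Nat.factorial (m - 1))
        * |ω| ^ ((m : ℝ) - 1 + α) := by
  have holder := hK.iteratedDeriv_fourierK_holder hm hα0.le hα1
  refine ⟨hK.contDiff_fourierK, holder, fun ω => ?_⟩
  have taylor := norm_sub_le_of_iteratedDeriv_sub_le hK.contDiff_fourierK
    (fun k hk0 hk => hK.iteratedDeriv_fourierK_zero hk0 hk) hα0.le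
    (fun t => by simpa using norm_sub_le_holderSemiC holder t 0) ω
  rwa [hK.fourierK_zero, Nat.cast_sub hm, Nat.cast_one] at taylor
end

section
/- Let m ≥ 1 and let K be an mth order kernel with constant C_K. Let μ be a Borel measure on ℝ with μ(ℝ) ≤ 1, and let x ∈ ℝ be a point with d := dist(x, supp μ) > 0. Then for every ε > 0, |[K_ε*μ](x)| ≤ C_K ε^m/(ε + d)^{m+1}. -/
/-!
Since ℝ is hereditarily Lindelöf, μ-almost every `y` lies in `supp μ`, so `|x - y| ≥ d` and
`1 + |x - y|/ε ≥ (ε + d)/ε`; the decay of `K` then bounds the integrand `K_ε(x - y)` by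
`C_K ε^m/(ε + d)^{m+1}` μ-almost everywhere, and a measure of total mass at most `1` keeps
this bound for the integral.
-/

open MeasureTheory Real Set

/-- The smoothed measure `[K_ε*μ](x) = ∫ ε⁻¹ K((x−y)/ε) dμ(y)`. -/
noncomputable def kernSmooth (K : ℝ → ℝ) (ε : ℝ) (μ : Measure ℝ) (x : ℝ) : ℝ :=
  ∫ y, ε⁻¹ * K ((x - y) / ε) ∂μ

/-- The topological support of a Borel measure on `ℝ`: the set of points all of
whose open neighbourhoods have positive measure. -/
def measSupport (μ : Measure ℝ) : Set ℝ :=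
  {y : ℝ | ∀ U : Set ℝ, IsOpen U → y ∈ U → 0 < μ U}

theorem measSupport_eq_support (μ : Measure ℝ) : measSupport μ = μ.support := by
  ext y
  simp only [measSupport, Measure.support_eq_forall_isOpen, mem_ofPred_eq]
  exact forall_congr' fun _ => Imp.swap

theorem ae_mem_measSupport (μ : Measure ℝ) : ∀ᵐ y ∂μ, y ∈ measSupport μ := by
  rw [measSupport_eq_support]
  exact Measure.support_mem_ae

theorem abs_inv_mul_comp_div_le {m : ℕ} {CK : ℝ} {K : ℝ → ℝ} (hCK : 0 ≤ CK)
    (hdecay : ∀ z, |K z| ≤ CK / (1 + |z|) ^ (m + 1)) {ε d t : ℝ} (hε : 0 < ε) (hd : 0 ≤ d)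
    (hdt : d ≤ |t|) :
    |ε⁻¹ * K (t / ε)| ≤ CK * ε ^ m / (ε + d) ^ (m + 1) := by
  have hεd : (ε + d) / ε ≤ 1 + |t / ε| := by
    rw [abs_div, abs_of_pos hε, add_div, div_self hε.ne']
    gcongr
  calc |ε⁻¹ * K (t / ε)| = ε⁻¹ * |K (t / ε)| := by
        rw [abs_mul, abs_of_pos (inv_pos.mpr hε)]
    _ ≤ ε⁻¹ * (CK / (1 + |t / ε|) ^ (m + 1)) := by gcongr; exact hdecay _
    _ ≤ ε⁻¹ * (CK / ((ε + d) / ε) ^ (m + 1)) := by gcongr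
    _ = CK * ε ^ m / (ε + d) ^ (m + 1) := by
        rw [div_pow, pow_succ ε]
        field_simp

theorem norm_integral_le_of_ae_norm_le_of_measure_univ_le_one {α E : Type*}
    [MeasurableSpace α] [NormedAddCommGroup E] [NormedSpace ℝ E] {μ : Measure α}
    (hμ : μ univ ≤ 1) {f : α → E} {C : ℝ} (hC : 0 ≤ C) (hf : ∀ᵐ a ∂μ, ‖f a‖ ≤ C) :
    ‖∫ a, f a ∂μ‖ ≤ C := by
  have : IsFiniteMeasure μ := ⟨hμ.trans_lt ENNReal.one_lt_top⟩
  have hμ_real : μ.real univ ≤ 1 := ENNReal.toReal_le_of_le_ofReal zero_le_one (by simpa)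
  calc ‖∫ a, f a ∂μ‖ ≤ C * μ.real univ := norm_integral_le_of_norm_le_const hf
    _ ≤ C := mul_le_of_le_one_right hC hμ_real

theorem stmt_11_general (m : ℕ) (CK : ℝ) (K : ℝ → ℝ)
    (hK : IsKernelOfOrder m CK K) (μ : Measure ℝ) (hμ : μ Set.univ ≤ 1)
    (x : ℝ) :
    ∀ ε : ℝ, 0 < ε →
      |kernSmooth K ε μ x| ≤
        CK * ε ^ m / (ε + Metric.infDist x (measSupport μ)) ^ (m + 1) := by
  intro ε hε
  have hdist : 0 ≤ Metric.infDist x (measSupport μ) := Metric.infDist_nonneg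
  have hCK := hK.CK_pos
  rw [← Real.norm_eq_abs, kernSmooth]
  refine norm_integral_le_of_ae_norm_le_of_measure_univ_le_one hμ (by positivity) ?_
  filter_upwards [ae_mem_measSupport μ] with y hy
  refine abs_inv_mul_comp_div_le hCK.le hK.decay hε hdist ?_
  simpa only [Real.dist_eq] using Metric.infDist_le_dist_of_mem hy

/-- Off-support decay of the smoothed measure: if `K` is an `m`th order kernel,
`μ` is a Borel measure on `ℝ` with `μ(ℝ) ≤ 1`, and
`d = dist(x, supp μ) > 0`, then `|[K_ε*μ](x)| ≤ C_K ε^m/(ε+d)^{m+1}` for all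
`ε > 0`. -/
theorem stmt_11 (m : ℕ) (hm : 1 ≤ m) (CK : ℝ) (K : ℝ → ℝ)
    (hK : IsKernelOfOrder m CK K) (μ : Measure ℝ) (hμ : μ Set.univ ≤ 1)
    (x : ℝ) (hd : 0 < Metric.infDist x (measSupport μ)) :
    ∀ ε : ℝ, 0 < ε →
      |kernSmooth K ε μ x| ≤
        CK * ε ^ m / (ε + Metric.infDist x (measSupport μ)) ^ (m + 1) :=
  stmt_11_general m CK K hK μ hμ x
end

section
/- Let μ be a finite Borel measure on ℝ and let x ∈ ℝ. Suppose there exists η > 0 such that the restriction of μ to (x−η, x+η) ∖ {x} is absolutely continuous with respect to Lebesgue measure with density bounded by some M < ∞ on that set. Then ∫_ℝ ε²/(ε² + (x−y)²) dμ(y) = μ({x}) + O(ε) as ε ↓ 0; more precisely, there exist C > 0 and ε₀ > 0 such that |∫_ℝ ε²/(ε² + (x−y)²) dμ(y) − μ({x})| ≤ C ε for all 0 < ε < ε₀. -/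
open MeasureTheory Real Set

/-!
Split `ℝ` into the atom `{x}`, the punctured neighbourhood `(x - η, x + η) \ {x}` and the rest.
The kernel equals `1` at `x`, which produces `μ {x}`. On the punctured neighbourhood
`μ ≤ M • volume`, and the kernel has Lebesgue integral `π ε`. Off the neighbourhood the kernel
is at most `ε² / η²`, which is `O(ε)`.
-/

lemma sq_div_sq_add_sq_eq_inv_one_add_sq {ε : ℝ} (hε : ε ≠ 0) (u : ℝ) :
    ε ^ 2 / (ε ^ 2 + u ^ 2) = (1 + (ε⁻¹ * u) ^ 2)⁻¹ := by
  field_simp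

lemma integrable_sq_div_sq_add_sq_sub (x : ℝ) {ε : ℝ} (hε : ε ≠ 0) :
    Integrable fun y : ℝ => ε ^ 2 / (ε ^ 2 + (x - y) ^ 2) := by
  simp_rw [sq_div_sq_add_sq_eq_inv_one_add_sq hε]
  exact (integrable_inv_one_add_sq.comp_mul_left' (inv_ne_zero hε)).comp_sub_left x

lemma integral_sq_div_sq_add_sq_sub (x : ℝ) {ε : ℝ} (hε : ε ≠ 0) :
    ∫ y : ℝ, ε ^ 2 / (ε ^ 2 + (x - y) ^ 2) = π * |ε| := by
  simp_rw [sq_div_sq_add_sq_eq_inv_one_add_sq hε]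
  rw [integral_sub_left_eq_self (fun u => (1 + (ε⁻¹ * u) ^ 2)⁻¹) volume x,
    Measure.integral_comp_mul_left (fun u => (1 + u ^ 2)⁻¹), integral_univ_inv_one_add_sq,
    inv_inv, smul_eq_mul, mul_comm]

lemma sq_div_sq_add_sq_le_one (ε u : ℝ) : ε ^ 2 / (ε ^ 2 + u ^ 2) ≤ 1 :=
  div_le_one_of_le₀ (le_add_of_nonneg_right (sq_nonneg u)) (by positivity)

lemma sq_div_sq_add_sq_sub_le_of_notMem_Ioo {x y η : ℝ} (hη : 0 < η)
    (hy : y ∉ Ioo (x - η) (x + η)) (ε : ℝ) :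
    ε ^ 2 / (ε ^ 2 + (x - y) ^ 2) ≤ ε ^ 2 / η ^ 2 := by
  have : η ^ 2 ≤ (x - y) ^ 2 := by
    rw [mem_Ioo, not_and_or, not_lt, not_lt] at hy
    rcases hy with h | h <;> nlinarith
  gcongr
  nlinarith [sq_nonneg ε]

lemma restrict_le_smul_of_eq_withDensity {α : Type*} [MeasurableSpace α] {μ ν : Measure α}
    {S : Set α} (hS : MeasurableSet S) {ρ : α → ℝ} {M : ℝ} (hρ : ∀ y ∈ S, ρ y ≤ M)
    (h : ν.restrict S = (μ.restrict S).withDensity fun y => ENNReal.ofReal (ρ y)) :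
    ν.restrict S ≤ ENNReal.ofReal M • μ :=
  calc ν.restrict S ≤ (μ.restrict S).withDensity fun _ => ENNReal.ofReal M := by
        rw [h]
        exact withDensity_mono <| (ae_restrict_iff' hS).2 <|
          ae_of_all _ fun y hy => ENNReal.ofReal_le_ofReal (hρ y hy)
    _ = ENNReal.ofReal M • μ.restrict S := withDensity_const _
    _ ≤ ENNReal.ofReal M • μ := by gcongr; exact μ.restrict_le_self

lemma integral_eq_measureReal_singleton_add {α : Type*} [MeasurableSpace α]
    [MeasurableSingletonClass α] {μ : Measure α} {f : α → ℝ} (hf : Integrable f μ) {x : α}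
    {U : Set α} (hU : MeasurableSet U) (hx : x ∈ U) :
    ∫ y, f y ∂μ = μ.real {x} * f x + ∫ y in U \ {x}, f y ∂μ + ∫ y in Uᶜ, f y ∂μ := by
  have hU_eq : {x} ∪ U \ {x} = U := union_sdiff_cancel (singleton_subset_iff.2 hx)
  rw [← integral_add_compl hU hf, ← hU_eq, setIntegral_union disjoint_sdiff_right
      (hU.diff (measurableSet_singleton x)) hf.integrableOn hf.integrableOn,
    integral_singleton, smul_eq_mul, hU_eq]

lemma abs_integral_sq_div_sq_add_sq_sub_measureReal_le {μ : Measure ℝ} [IsFiniteMeasure μ]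
    {x η M ε : ℝ} (hη : 0 < η) (hε : 0 < ε) {ρ : ℝ → ℝ}
    (hρ : ∀ y ∈ Ioo (x - η) (x + η) \ {x}, ρ y ≤ M)
    (hμρ : μ.restrict (Ioo (x - η) (x + η) \ {x}) =
      (volume.restrict (Ioo (x - η) (x + η) \ {x})).withDensity fun y => ENNReal.ofReal (ρ y)) :
    |∫ y, ε ^ 2 / (ε ^ 2 + (x - y) ^ 2) ∂μ - μ.real {x}| ≤
      max M 0 * (π * ε) + ε ^ 2 / η ^ 2 * μ.real univ := by
  set f : ℝ → ℝ := fun y => ε ^ 2 / (ε ^ 2 + (x - y) ^ 2)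
  set U := Ioo (x - η) (x + η)
  have hf_nonneg : 0 ≤ f := fun y => by positivity
  have hf : Integrable f μ := .of_bound (by fun_prop) 1 <| ae_of_all _ fun y => by
    rw [Real.norm_of_nonneg (hf_nonneg y)]
    exact sq_div_sq_add_sq_le_one ε (x - y)
  have h_near : ∫ y in U \ {x}, f y ∂μ ≤ max M 0 * (π * ε) :=
    calc ∫ y in U \ {x}, f y ∂μ ≤ ∫ y, f y ∂(ENNReal.ofReal M • volume) :=
          integral_mono_measure
            (restrict_le_smul_of_eq_withDensity (measurableSet_Ioo.diff
              (measurableSet_singleton x)) hρ hμρ)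
            (ae_of_all _ hf_nonneg)
            ((integrable_sq_div_sq_add_sq_sub x hε.ne').smul_measure ENNReal.ofReal_ne_top)
      _ = max M 0 * (π * ε) := by
          rw [integral_smul_measure, integral_sq_div_sq_add_sq_sub x hε.ne', abs_of_pos hε,
            ENNReal.toReal_ofReal', smul_eq_mul]
  have h_far : ∫ y in Uᶜ, f y ∂μ ≤ ε ^ 2 / η ^ 2 * μ.real univ :=
    calc ∫ y in Uᶜ, f y ∂μ ≤ ∫ _ in Uᶜ, ε ^ 2 / η ^ 2 ∂μ :=
          setIntegral_mono_on hf.integrableOn integrableOn_const measurableSet_Ioo.compl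
            fun y hy => sq_div_sq_add_sq_sub_le_of_notMem_Ioo hη hy ε
      _ ≤ ε ^ 2 / η ^ 2 * μ.real univ := by
          rw [setIntegral_const, smul_eq_mul, mul_comm]
          exact mul_le_mul_of_nonneg_left (measureReal_mono (subset_univ _)) (by positivity)
  have hfx : f x = 1 := by simp [f, hε.ne']
  have h_near_nonneg : 0 ≤ ∫ y in U \ {x}, f y ∂μ := setIntegral_nonneg
    (measurableSet_Ioo.diff (measurableSet_singleton x)) fun y _ => hf_nonneg y
  have h_far_nonneg : 0 ≤ ∫ y in Uᶜ, f y ∂μ :=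
    setIntegral_nonneg measurableSet_Ioo.compl fun y _ => hf_nonneg y
  rw [integral_eq_measureReal_singleton_add hf measurableSet_Ioo
    (show x ∈ U from ⟨by linarith, by linarith⟩), hfx, abs_le]
  constructor <;> linarith

/-- If `μ` is a finite Borel measure on `ℝ` whose restriction to
`(x−η, x+η) ∖ {x}` is absolutely continuous with density bounded by `M`, then
`∫ ε²/(ε²+(x−y)²) dμ(y) = μ({x}) + O(ε)` as `ε ↓ 0`. -/
theorem stmt_14 (μ : Measure ℝ) [IsFiniteMeasure μ] (x : ℝ)
    (η M : ℝ) (hη : 0 < η)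
    (hac : ∃ ρ : ℝ → ℝ,
      (∀ y ∈ Ioo (x - η) (x + η) \ {x}, 0 ≤ ρ y ∧ ρ y ≤ M) ∧
      μ.restrict (Ioo (x - η) (x + η) \ {x}) =
        (volume.restrict (Ioo (x - η) (x + η) \ {x})).withDensity
          (fun y => ENNReal.ofReal (ρ y))) :
    ∃ C > (0 : ℝ), ∃ ε₀ > (0 : ℝ), ∀ ε : ℝ, 0 < ε → ε < ε₀ →
      |(∫ y, ε ^ 2 / (ε ^ 2 + (x - y) ^ 2) ∂μ) - (μ {x}).toReal| ≤ C * ε := by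
  obtain ⟨ρ, hρ, hμρ⟩ := hac
  refine ⟨max M 0 * π + μ.real univ / η ^ 2 + 1, by positivity, 1, one_pos, fun ε hε hε1 => ?_⟩
  have h_sq : ε ^ 2 / η ^ 2 * μ.real univ ≤ μ.real univ / η ^ 2 * ε := by
    calc ε ^ 2 / η ^ 2 * μ.real univ = μ.real univ / η ^ 2 * ε * ε := by ring
      _ ≤ μ.real univ / η ^ 2 * ε := mul_le_of_le_one_right (by positivity) hε1.le
  calc |(∫ y, ε ^ 2 / (ε ^ 2 + (x - y) ^ 2) ∂μ) - μ.real {x}|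
      ≤ max M 0 * (π * ε) + ε ^ 2 / η ^ 2 * μ.real univ :=
        abs_integral_sq_div_sq_add_sq_sub_measureReal_le hη hε (fun y hy => (hρ y hy).2) hμρ
    _ ≤ (max M 0 * π + μ.real univ / η ^ 2 + 1) * ε := by nlinarith
end

section
/- Let m ≥ 1, let K be an mth order kernel with constant C_K, and let μ be a Borel probability measure on ℝ. Let n ≥ 0 be an integer and α ∈ (0,1) with n + α < m, and let F : ℝ → ℂ be n-times continuously differentiable with ‖F‖_{C^{n,α}(ℝ)} < ∞ (in particular F and its derivatives up to order n are bounded and F^{(n)} is α-Hölder continuous on ℝ). Then |∫_ℝ F(y) dμ(y) − ∫_ℝ F(x)[K_ε*μ](x) dx| = O(ε^{n+α}) + O(ε^m log(1/ε)) as ε ↓ 0. -/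
open MeasureTheory Real Set

/-!
Fubini and the substitution `x = y + ε v` turn `∫ F(x) [K_ε*μ](x) dx` into
`∫ (∫ K(v) F(y + ε v) dv) dμ(y)`. Since `K` has total mass one and vanishing moments of orders
`1, …, n`, the inner integral reproduces `F(y)` when `F(y + ε v)` is replaced by its Taylor
polynomial of degree `n` at `y`. The Hölder continuity of `F⁽ⁿ⁾` bounds the Taylor remainder by
`C |ε v|^(n+α)`, and `∫ |K(v)| |v|^(n+α) dv < ∞` because `K` decays like `|v|^(-m-1)` with
`n + α < m`. So the error is at most a constant times `ε^(n+α)`, uniformly in `y`.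
-/

section Taylor

variable {E : Type*} [NormedAddCommGroup E] [NormedSpace ℝ E]

/-- The Taylor polynomial of degree `n` of `F` at `y`, evaluated at `y + t`. -/
noncomputable def taylorSum (F : ℝ → E) (n : ℕ) (y t : ℝ) : E :=
  ∑ j ∈ Finset.range (n + 1), (t ^ j / j.factorial) • iteratedDeriv j F y

@[simp]
lemma taylorSum_zero_right (F : ℝ → E) (n : ℕ) (y : ℝ) : taylorSum F n y 0 = F y := by
  rw [taylorSum, Finset.sum_eq_single 0 (fun j _ hj => by simp [hj]) (by simp)]
  simp

lemma hasDerivAt_taylorSum_succ (F : ℝ → E) (n : ℕ) (y s : ℝ) :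
    HasDerivAt (taylorSum F (n + 1) y) (taylorSum (deriv F) n y s) s := by
  have hterm : ∀ j ∈ Finset.range (n + 2), HasDerivAt
      (fun t : ℝ => (t ^ j / j.factorial) • iteratedDeriv j F y)
      ((j * s ^ (j - 1) / j.factorial) • iteratedDeriv j F y) s :=
    fun j _ => ((hasDerivAt_pow j s).div_const _).smul_const _
  refine (HasDerivAt.fun_sum hterm).congr_deriv ?_
  rw [Finset.sum_range_succ', taylorSum]
  simp only [CharP.cast_eq_zero, zero_mul, zero_div, zero_smul, add_zero, iteratedDeriv_succ']
  refine Finset.sum_congr rfl fun i _ => ?_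
  rw [Nat.factorial_succ, Nat.add_sub_cancel]
  congr 1
  push_cast
  field_simp

theorem norm_sub_taylorSum_le_of_holder {α C : ℝ} (hα : 0 < α) (hC : 0 ≤ C) {n : ℕ}
    {F : ℝ → E} (hF : ContDiff ℝ n F)
    (hhold : ∀ x z, ‖iteratedDeriv n F x - iteratedDeriv n F z‖ ≤ C * |x - z| ^ α) (y t : ℝ) :
    ‖F (y + t) - taylorSum F n y t‖ ≤ C * |t| ^ ((n : ℝ) + α) := by
  induction n generalizing F t with
  | zero =>
    simpa [taylorSum] using hhold (y + t) y
  | succ n ih =>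
    rw [Nat.cast_add_one, contDiff_succ_iff_deriv] at hF
    rw [iteratedDeriv_succ'] at hhold
    have hderiv : ∀ s, ‖deriv F (y + s) - taylorSum (deriv F) n y s‖ ≤ C * |s| ^ ((n : ℝ) + α) :=
      ih hF.2.2 hhold
    have hmv := Convex.norm_image_sub_le_of_norm_hasDerivWithin_le
      (f := fun s => F (y + s) - taylorSum F (n + 1) y s)
      (fun s _ => (((hF.1 (y + s)).hasDerivAt.comp_const_add y s).sub
        (hasDerivAt_taylorSum_succ F n y s)).hasDerivWithinAt)
      (fun s hs => (hderiv s).trans (mul_le_mul_of_nonneg_left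
        (rpow_le_rpow (abs_nonneg s) (by simpa using abs_sub_left_of_mem_uIcc hs) (by positivity))
        hC))
      (convex_uIcc 0 t) left_mem_uIcc right_mem_uIcc
    simp only [add_zero, taylorSum_zero_right, sub_self, sub_zero, Real.norm_eq_abs] at hmv
    calc ‖F (y + t) - taylorSum F (n + 1) y t‖ ≤ C * |t| ^ ((n : ℝ) + α) * |t| := hmv
      _ = C * |t| ^ (((n + 1 : ℕ) : ℝ) + α) := by
        rcases eq_or_ne t 0 with rfl | ht
        · simpa using Or.inr (zero_rpow (by positivity))
        · rw [mul_assoc, ← rpow_add_one (abs_ne_zero.2 ht)]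
          push_cast
          ring_nf

lemma smul_taylorSum_mul (F : ℝ → E) (n : ℕ) (c y ε v : ℝ) :
    c • taylorSum F n y (ε * v) = ∑ j ∈ Finset.range (n + 1),
      (c * v ^ j) • ((ε ^ j / j.factorial) • iteratedDeriv j F y) := by
  rw [taylorSum, Finset.smul_sum]
  refine Finset.sum_congr rfl fun j _ => ?_
  rw [smul_smul, smul_smul, mul_pow]
  ring_nf

end Taylor

lemma integral_kernel_rescale {E : Type*} [NormedAddCommGroup E] [NormedSpace ℝ E]
    (K : ℝ → ℝ) {ε : ℝ} (hε : 0 < ε) (φ : ℝ → E) (y : ℝ) :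
    ∫ x, (ε⁻¹ * K ((x - y) / ε)) • φ x = ∫ v, K v • φ (y + ε * v) := by
  rw [← integral_add_right_eq_self _ y]
  have hsub : (fun u : ℝ => (ε⁻¹ * K ((u + y - y) / ε)) • φ (u + y))
      = fun u => (fun v => (ε⁻¹ * K v) • φ (y + ε * v)) (u / ε) := by
    funext u
    dsimp only
    rw [add_sub_cancel_right, mul_div_cancel₀ _ hε.ne', add_comm]
  rw [hsub, Measure.integral_comp_div (fun v => (ε⁻¹ * K v) • φ (y + ε * v)), abs_of_pos hε,
    ← integral_smul]
  simp_rw [smul_smul, ← mul_assoc, mul_inv_cancel₀ hε.ne', one_mul]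

lemma integrable_abs_mul_abs_rpow_of_decay {m : ℕ} {C : ℝ} {K : ℝ → ℝ}
    (hK : AEStronglyMeasurable K) (hdecay : ∀ x, |K x| ≤ C / (1 + |x|) ^ (m + 1))
    {s : ℝ} (hs0 : 0 ≤ s) (hsm : s < m) :
    Integrable (fun v => |K v| * |v| ^ s) := by
  have hr : (Module.finrank ℝ ℝ : ℝ) < m + 1 - s := by
    rw [Module.finrank_self, Nat.cast_one]
    linarith
  refine ((integrable_one_add_norm hr).const_mul C).mono'
    (hK.norm.mul (continuous_abs.rpow_const fun _ => Or.inr hs0).aestronglyMeasurable)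
    (ae_of_all _ fun v => ?_)
  have hv : 0 < 1 + |v| := by positivity
  have hKv : |K v| ≤ C * (1 + |v|) ^ (-((m : ℝ) + 1)) := by
    rw [rpow_neg hv.le, ← div_eq_mul_inv]
    exact_mod_cast hdecay v
  rw [Real.norm_eq_abs, abs_of_nonneg (by positivity), Real.norm_eq_abs]
  calc |K v| * |v| ^ s ≤ C * (1 + |v|) ^ (-((m : ℝ) + 1)) * (1 + |v|) ^ s :=
        mul_le_mul hKv (rpow_le_rpow (abs_nonneg v) (by linarith) hs0) (by positivity)
          ((abs_nonneg _).trans hKv)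
    _ = C * (1 + |v|) ^ (-((m : ℝ) + 1 - s)) := by
        rw [mul_assoc, ← rpow_add hv]
        ring_nf

namespace IsKernelOfOrder

variable {m : ℕ} {CK : ℝ} {K : ℝ → ℝ} {E : Type*} [NormedAddCommGroup E] [NormedSpace ℝ E]

lemma integrable_mul_pow (hK : IsKernelOfOrder m CK K) {j : ℕ} (hj : j < m) :
    Integrable (fun x => K x * x ^ j) := by
  rcases Nat.eq_zero_or_pos j with rfl | hj0
  · simpa using hK.integrable
  · exact hK.moment_integrable j hj0 hj

lemma integrable_abs_mul_abs_rpow (hK : IsKernelOfOrder m CK K) {s : ℝ} (hs0 : 0 ≤ s)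
    (hsm : s < m) : Integrable (fun v => |K v| * |v| ^ s) :=
  integrable_abs_mul_abs_rpow_of_decay hK.integrable.1 hK.decay hs0 hsm

lemma integrable_smul_taylorSum (hK : IsKernelOfOrder m CK K) {n : ℕ} (hnm : n < m)
    (F : ℝ → E) (y ε : ℝ) : Integrable (fun v => K v • taylorSum F n y (ε * v)) := by
  simp_rw [smul_taylorSum_mul]
  exact integrable_finsetSum _ fun j hj => (hK.integrable_mul_pow (by grind)).smul_const _

lemma integral_smul_taylorSum [CompleteSpace E] (hK : IsKernelOfOrder m CK K) {n : ℕ}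
    (hnm : n < m) (F : ℝ → E) (y ε : ℝ) : ∫ v, K v • taylorSum F n y (ε * v) = F y := by
  simp_rw [smul_taylorSum_mul]
  rw [integral_finsetSum _ fun j hj => (hK.integrable_mul_pow (by grind)).smul_const _]
  simp_rw [integral_smul_const]
  rw [Finset.sum_eq_single 0 (fun j hj hj0 => by
    rw [hK.moment_zero j (Nat.pos_of_ne_zero hj0) (by grind), zero_smul])
    (by simp)]
  simp [hK.integral_one]

theorem norm_sub_integral_smul_le [CompleteSpace E] (hK : IsKernelOfOrder m CK K) {n : ℕ}
    (hnm : n < m) {s CH : ℝ} (hs0 : 0 ≤ s) (hsm : s < m) {F : ℝ → E} (hF : Continuous F)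
    (htaylor : ∀ y t, ‖F (y + t) - taylorSum F n y t‖ ≤ CH * |t| ^ s) {ε : ℝ} (hε : 0 < ε)
    (y : ℝ) :
    ‖F y - ∫ v, K v • F (y + ε * v)‖ ≤ CH * (∫ v, |K v| * |v| ^ s) * ε ^ s := by
  set R : ℝ → E := fun v => K v • (F (y + ε * v) - taylorSum F n y (ε * v))
  have hT := hK.integrable_smul_taylorSum hnm F y ε
  have hW := hK.integrable_abs_mul_abs_rpow hs0 hsm
  have hRle : ∀ v, ‖R v‖ ≤ CH * ε ^ s * (|K v| * |v| ^ s) := fun v => by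
    calc ‖R v‖ = |K v| * ‖F (y + ε * v) - taylorSum F n y (ε * v)‖ := norm_smul _ _
      _ ≤ |K v| * (CH * |ε * v| ^ s) := mul_le_mul_of_nonneg_left (htaylor _ _) (abs_nonneg _)
      _ = CH * ε ^ s * (|K v| * |v| ^ s) := by
        rw [abs_mul, abs_of_pos hε, mul_rpow hε.le (abs_nonneg v)]
        ring
  have hR : Integrable R := by
    refine (hW.const_mul _).mono' ?_ (ae_of_all _ hRle)
    simp_rw [R, smul_sub]
    exact (hK.integrable.1.smul (hF.comp (by fun_prop)).aestronglyMeasurable).sub hT.1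
  have hsplit : (fun v => K v • F (y + ε * v)) = fun v => K v • taylorSum F n y (ε * v) + R v := by
    funext v
    rw [← smul_add, add_sub_cancel]
  rw [hsplit, integral_add hT hR, hK.integral_smul_taylorSum hnm, sub_add_cancel_left, norm_neg]
  calc ‖∫ v, R v‖ ≤ ∫ v, CH * ε ^ s * (|K v| * |v| ^ s) :=
        norm_integral_le_of_norm_le (hW.const_mul _) (ae_of_all _ hRle)
    _ = CH * (∫ v, |K v| * |v| ^ s) * ε ^ s := by
        rw [integral_const_mul]
        ring

end IsKernelOfOrder

section Smoothing

variable {E : Type*} [NormedAddCommGroup E] [NormedSpace ℝ E]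

lemma integrable_prod_kernel_smul {K : ℝ → ℝ} (hK : Integrable K) (μ : Measure ℝ)
    [IsFiniteMeasure μ] {ε : ℝ} (hε : ε ≠ 0) {F : ℝ → E} (hF : AEStronglyMeasurable F)
    {M : ℝ} (hFM : ∀ x, ‖F x‖ ≤ M) :
    Integrable (fun p : ℝ × ℝ => (ε⁻¹ * K ((p.1 - p.2) / ε)) • F p.1) (volume.prod μ) := by
  have hk : Integrable (fun z => ε⁻¹ * K (z / ε)) := (hK.comp_div hε).const_mul ε⁻¹
  -- `(x, y) ↦ k (x - y)` is the convolution integrand of `k` against `1 ∈ L¹(μ)`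
  have hkprod : Integrable (fun p : ℝ × ℝ => 1 * (ε⁻¹ * K ((p.1 - p.2) / ε))) (volume.prod μ) :=
    (integrable_const (1 : ℝ)).convolution_integrand (ContinuousLinearMap.mul ℝ ℝ) hk
  simp_rw [one_mul] at hkprod
  refine (hkprod.norm.const_mul M).mono' (hkprod.1.smul hF.comp_fst) (ae_of_all _ fun p => ?_)
  rw [norm_smul, mul_comm M]
  exact mul_le_mul_of_nonneg_left (hFM _) (norm_nonneg _)

lemma integral_kernSmooth_smul [CompleteSpace E] {K : ℝ → ℝ} (hK : Integrable K)
    (μ : Measure ℝ) [IsFiniteMeasure μ] {ε : ℝ} (hε : ε ≠ 0) {F : ℝ → E}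
    (hF : AEStronglyMeasurable F) {M : ℝ} (hFM : ∀ x, ‖F x‖ ≤ M) :
    ∫ x, kernSmooth K ε μ x • F x = ∫ y, (∫ x, (ε⁻¹ * K ((x - y) / ε)) • F x) ∂μ := by
  simp_rw [kernSmooth, ← integral_smul_const]
  exact integral_integral_swap (f := fun x y => (ε⁻¹ * K ((x - y) / ε)) • F x)
    (integrable_prod_kernel_smul hK μ hε hF hFM)

theorem norm_integral_sub_integral_mul_kernSmooth_le {m : ℕ} {CK : ℝ} {K : ℝ → ℝ}
    (hK : IsKernelOfOrder m CK K) (μ : Measure ℝ) [IsProbabilityMeasure μ] {n : ℕ} (hnm : n < m)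
    {s CH M : ℝ} (hs0 : 0 ≤ s) (hsm : s < m) {F : ℝ → ℂ} (hF : Continuous F)
    (hFM : ∀ x, ‖F x‖ ≤ M)
    (htaylor : ∀ y t, ‖F (y + t) - taylorSum F n y t‖ ≤ CH * |t| ^ s) {ε : ℝ} (hε : 0 < ε) :
    ‖(∫ y, F y ∂μ) - ∫ x, F x * (kernSmooth K ε μ x : ℂ)‖ ≤
      CH * (∫ v, |K v| * |v| ^ s) * ε ^ s := by
  have hFμ : Integrable F μ := (integrable_const M).mono' hF.aestronglyMeasurable (ae_of_all _ hFM)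
  have hsmooth : ∫ x, F x * (kernSmooth K ε μ x : ℂ) =
      ∫ y, (∫ x, (ε⁻¹ * K ((x - y) / ε)) • F x) ∂μ := by
    rw [← integral_kernSmooth_smul hK.integrable μ hε.ne' hF.aestronglyMeasurable hFM]
    simp_rw [Complex.real_smul, mul_comm]
  have hsmoothμ : Integrable (fun y => ∫ x, (ε⁻¹ * K ((x - y) / ε)) • F x) μ :=
    (integrable_prod_kernel_smul hK.integrable μ hε.ne' hF.aestronglyMeasurable
      hFM).integral_prod_right
  rw [hsmooth, ← integral_sub hFμ hsmoothμ]
  simp_rw [integral_kernel_rescale K hε]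
  simpa only [probReal_univ, mul_one] using norm_integral_le_of_norm_le_const (μ := μ)
    (ae_of_all _ (hK.norm_sub_integral_smul_le hnm hs0 hsm hF htaylor hε))

end Smoothing

theorem stmt_15_general (m : ℕ) (CK : ℝ) (K : ℝ → ℝ)
    (hK : IsKernelOfOrder m CK K) (μ : Measure ℝ) [IsProbabilityMeasure μ]
    (n : ℕ) (α : ℝ) (hα0 : 0 < α) (hna : (n : ℝ) + α < m)
    (F : ℝ → ℂ) (hF : ContDiff ℝ (n : ℕ) F)
    (hFbdd : ∀ j ≤ n, ∃ M : ℝ, ∀ x : ℝ, ‖iteratedDeriv j F x‖ ≤ M)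
    (hFhold : ∃ C : ℝ, 0 ≤ C ∧ ∀ x y : ℝ,
      ‖iteratedDeriv n F x - iteratedDeriv n F y‖ ≤ C * |x - y| ^ α) :
    ∃ C > (0 : ℝ), ∃ ε₀ ∈ Set.Ioo (0 : ℝ) 1, ∀ ε : ℝ, 0 < ε → ε < ε₀ →
      ‖(∫ y, F y ∂μ) - ∫ x : ℝ, F x * (kernSmooth K ε μ x : ℂ)‖ ≤
        C * (ε ^ ((n : ℝ) + α) + ε ^ m * Real.log (1 / ε)) := by
  obtain ⟨CH, hCH, hhold⟩ := hFhold
  obtain ⟨M, hFM⟩ := hFbdd 0 n.zero_le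
  simp only [iteratedDeriv_zero] at hFM
  have hnm : n < m := by exact_mod_cast (by linarith : (n : ℝ) < m)
  set I := ∫ v, |K v| * |v| ^ ((n : ℝ) + α)
  have hI : 0 ≤ I := integral_nonneg fun v => by positivity
  refine ⟨CH * I + 1, by positivity, 1 / 2, by norm_num, fun ε hε hε₀ => ?_⟩
  have hlog : 0 ≤ ε ^ m * log (1 / ε) :=
    mul_nonneg (by positivity) (log_nonneg (by rw [le_div_iff₀ hε]; linarith))
  calc _ ≤ CH * I * ε ^ ((n : ℝ) + α) :=
        norm_integral_sub_integral_mul_kernSmooth_le hK μ hnm (by positivity) hna hF.continuous hFM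
          (norm_sub_taylorSum_le_of_holder hα0 hCH hF hhold) hε
    _ ≤ (CH * I + 1) * (ε ^ ((n : ℝ) + α) + ε ^ m * log (1 / ε)) :=
        mul_le_mul (by linarith) (le_add_of_nonneg_right hlog) (by positivity) (by positivity)

/-- Convergence of integrals of smooth functionals: if `K` is an `m`th order
kernel, `μ` a Borel probability measure, and `F ∈ C^{n,α}(ℝ)` with bounded
derivatives, `n + α < m`, then
`|∫ F dμ − ∫ F(x)[K_ε*μ](x) dx| = O(ε^{n+α}) + O(ε^m log(1/ε))` as `ε ↓ 0`. -/
theorem stmt_15 (m : ℕ) (hm : 1 ≤ m) (CK : ℝ) (K : ℝ → ℝ)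
    (hK : IsKernelOfOrder m CK K) (μ : Measure ℝ) [IsProbabilityMeasure μ]
    (n : ℕ) (α : ℝ) (hα0 : 0 < α) (hα1 : α < 1) (hna : (n : ℝ) + α < m)
    (F : ℝ → ℂ) (hF : ContDiff ℝ (n : ℕ) F)
    (hFbdd : ∀ j ≤ n, ∃ M : ℝ, ∀ x : ℝ, ‖iteratedDeriv j F x‖ ≤ M)
    (hFhold : ∃ C : ℝ, 0 ≤ C ∧ ∀ x y : ℝ,
      ‖iteratedDeriv n F x - iteratedDeriv n F y‖ ≤ C * |x - y| ^ α) :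
    ∃ C > (0 : ℝ), ∃ ε₀ ∈ Set.Ioo (0 : ℝ) 1, ∀ ε : ℝ, 0 < ε → ε < ε₀ →
      ‖(∫ y, F y ∂μ) - ∫ x : ℝ, F x * (kernSmooth K ε μ x : ℂ)‖ ≤
        C * (ε ^ ((n : ℝ) + α) + ε ^ m * Real.log (1 / ε)) :=
  stmt_15_general m CK K hK μ n α hα0 hna F hF hFbdd hFhold
end

section
/- For every α ∈ [0,1) and every ε > 0, the function y ↦ |y|^α ε/(ε² + y²) is integrable on ℝ and (1/π) ∫_ℝ ε |y|^α/(ε² + y²) dy = sec(απ/2) · ε^α. -/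
open MeasureTheory Real Set

/-! After the substitution `y = ε x` the moment is `ε^α ∫ |x|^α / (1 + x²) dx`, twice the
integral over the half-line. There, `t = x²` followed by `t = s / (1 - s)` turns
`∫₀^∞ x^α / (1 + x²) dx` into `½ B(u, 1 - u) = ½ Γ(u) Γ(1 - u)` with `u = (1 + α) / 2`, and
Euler's reflection formula evaluates this as `π / (2 sin (π u)) = π / (2 cos (α π / 2))`. -/

section

variable {u v : ℝ}

lemma ofReal_rpow_mul_one_sub_rpow {x : ℝ} (hx : x ∈ Ioo (0 : ℝ) 1) :
    ((x ^ (u - 1) * (1 - x) ^ (v - 1) : ℝ) : ℂ) =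
      (x : ℂ) ^ ((u : ℂ) - 1) * (1 - (x : ℂ)) ^ ((v : ℂ) - 1) := by
  rw [Complex.ofReal_mul, Complex.ofReal_cpow hx.1.le, Complex.ofReal_cpow (by linarith [hx.2])]
  push_cast
  rfl

lemma integrableOn_rpow_mul_one_sub_rpow (hu : 0 < u) (hv : 0 < v) :
    IntegrableOn (fun s : ℝ => s ^ (u - 1) * (1 - s) ^ (v - 1)) (Ioo 0 1) := by
  have hc : IntegrableOn
      (fun x : ℝ => ‖(x : ℂ) ^ ((u : ℂ) - 1) * (1 - (x : ℂ)) ^ ((v : ℂ) - 1)‖) (Ioo 0 1) :=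
    ((Complex.betaIntegral_convergent (by simpa) (by simpa)).1.mono_set Ioo_subset_Ioc_self).norm
  refine hc.congr_fun (fun x hx => ?_) measurableSet_Ioo
  beta_reduce
  rw [← ofReal_rpow_mul_one_sub_rpow hx, Complex.norm_real, Real.norm_of_nonneg]
  exact mul_nonneg (rpow_nonneg hx.1.le _) (rpow_nonneg (by linarith [hx.2]) _)

lemma integral_rpow_mul_one_sub_rpow (hu : 0 < u) (hv : 0 < v) :
    ∫ s in Ioo (0 : ℝ) 1, s ^ (u - 1) * (1 - s) ^ (v - 1) =
      Gamma u * Gamma v / Gamma (u + v) := by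
  have h : Complex.betaIntegral u v =
      ((∫ s in Ioo (0 : ℝ) 1, s ^ (u - 1) * (1 - s) ^ (v - 1) : ℝ) : ℂ) := by
    rw [Complex.betaIntegral, intervalIntegral.integral_of_le zero_le_one,
      integral_Ioc_eq_integral_Ioo, setIntegral_congr_fun measurableSet_Ioo fun x hx =>
        (ofReal_rpow_mul_one_sub_rpow hx).symm]
    exact integral_ofReal (𝕜 := ℂ)
  rw [Complex.betaIntegral_eq_Gamma_mul_div _ _ (by simpa) (by simpa)] at h
  apply Complex.ofReal_injective
  rw [← h]
  push_cast [← Complex.Gamma_ofReal]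
  rfl

end

lemma hasDerivAt_div_one_sub {x : ℝ} (hx : x ≠ 1) :
    HasDerivAt (fun s : ℝ => s / (1 - s)) ((1 - x) ^ 2)⁻¹ x := by
  have hx' : 1 - x ≠ 0 := sub_ne_zero.mpr hx.symm
  refine ((hasDerivAt_id' x).div ((hasDerivAt_id' x).const_sub 1) hx').congr_deriv ?_
  field_simp
  ring

lemma strictMonoOn_div_one_sub : StrictMonoOn (fun s : ℝ => s / (1 - s)) (Iio 1) := by
  intro x hx y hy hxy
  have hx : 0 < 1 - x := sub_pos.mpr hx
  have hy : 0 < 1 - y := sub_pos.mpr hy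
  rw [div_lt_div_iff₀ hx hy]
  nlinarith

lemma image_div_one_sub_Ioo : (fun s : ℝ => s / (1 - s)) '' Ioo 0 1 = Ioi 0 := by
  ext t
  constructor
  · rintro ⟨s, hs, rfl⟩
    exact div_pos hs.1 (sub_pos.mpr hs.2)
  · intro (ht : 0 < t)
    refine ⟨t / (1 + t), ⟨by positivity, (div_lt_one (by positivity)).mpr (by linarith)⟩, ?_⟩
    field_simp
    ring

section

variable {u : ℝ}

lemma abs_deriv_mul_rpow_div_one_add_div_one_sub {x : ℝ} (hx : x ∈ Ioo (0 : ℝ) 1) :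
    |((1 - x) ^ 2)⁻¹| • ((x / (1 - x)) ^ (u - 1) / (1 + x / (1 - x))) =
      x ^ (u - 1) * (1 - x) ^ ((1 - u) - 1) := by
  have h1x : 0 < 1 - x := sub_pos.mpr hx.2
  have hsum : 1 + x / (1 - x) = (1 - x)⁻¹ := by field_simp; ring
  rw [smul_eq_mul, hsum, div_rpow hx.1.le h1x.le, abs_of_pos (by positivity),
    rpow_sub h1x u 1, rpow_sub h1x (1 - u) 1, rpow_sub h1x 1 u, rpow_one]
  have : 0 < (1 - x) ^ u := rpow_pos_of_pos h1x u
  field_simp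

lemma integrableOn_rpow_div_one_add (hu0 : 0 < u) (hu1 : u < 1) :
    IntegrableOn (fun t : ℝ => t ^ (u - 1) / (1 + t)) (Ioi 0) := by
  rw [← image_div_one_sub_Ioo, integrableOn_image_iff_integrableOn_abs_deriv_smul
    measurableSet_Ioo (fun x hx => (hasDerivAt_div_one_sub hx.2.ne).hasDerivWithinAt)
    (strictMonoOn_div_one_sub.injOn.mono fun _ hx => hx.2)]
  exact (integrableOn_rpow_mul_one_sub_rpow hu0 (sub_pos.mpr hu1)).congr_fun
    (fun x hx => (abs_deriv_mul_rpow_div_one_add_div_one_sub hx).symm) measurableSet_Ioo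

lemma integral_rpow_div_one_add (hu0 : 0 < u) (hu1 : u < 1) :
    ∫ t in Ioi (0 : ℝ), t ^ (u - 1) / (1 + t) = π / sin (π * u) := by
  rw [← image_div_one_sub_Ioo, integral_image_eq_integral_abs_deriv_smul
    measurableSet_Ioo (fun x hx => (hasDerivAt_div_one_sub hx.2.ne).hasDerivWithinAt)
    (strictMonoOn_div_one_sub.injOn.mono fun _ hx => hx.2),
    setIntegral_congr_fun measurableSet_Ioo fun x hx =>
      abs_deriv_mul_rpow_div_one_add_div_one_sub hx,
    integral_rpow_mul_one_sub_rpow hu0 (sub_pos.mpr hu1), add_sub_cancel, Gamma_one, div_one,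
    Gamma_mul_Gamma_one_sub]

end

lemma integrable_comp_abs {E : Type*} [NormedAddCommGroup E] {f : ℝ → E}
    (hf : IntegrableOn f (Ioi 0)) : Integrable fun x => f |x| := by
  have hIoi : IntegrableOn (fun x => f |x|) (Ioi 0) :=
    hf.congr_fun (fun x (hx : 0 < x) => by rw [abs_of_pos hx]) measurableSet_Ioi
  have hIic : IntegrableOn (fun x => f |x|) (Iic 0) := by
    have hneg : MeasurableEmbedding fun x : ℝ => -x := (Homeomorph.neg ℝ).measurableEmbedding
    rw [← Measure.map_neg_eq_self (volume : Measure ℝ), hneg.integrableOn_map_iff]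
    simp_rw [Function.comp_def, abs_neg, neg_preimage, neg_Iic, neg_zero]
    exact Iff.mpr integrableOn_Ici_iff_integrableOn_Ioi hIoi
  simpa only [Iic_union_Ioi, integrableOn_univ] using hIic.union hIoi

section

variable {α : ℝ}

lemma rpow_smul_rpow_div_one_add_rpow_two {x : ℝ} (hx : 0 < x) :
    x ^ ((2 : ℝ) - 1) • ((x ^ (2 : ℝ)) ^ ((α + 1) / 2 - 1) / (1 + x ^ (2 : ℝ))) =
      x ^ α / (1 + x ^ 2) := by
  rw [smul_eq_mul, ← rpow_mul hx.le, rpow_two, mul_div_assoc', ← rpow_add hx]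
  ring_nf

lemma integrableOn_rpow_div_one_add_sq (hα : -1 < α) (hα' : α < 1) :
    IntegrableOn (fun x : ℝ => x ^ α / (1 + x ^ 2)) (Ioi 0) := by
  have h := (integrableOn_Ioi_comp_rpow_iff' _ two_ne_zero).mpr
    (integrableOn_rpow_div_one_add (u := (α + 1) / 2) (by linarith) (by linarith))
  exact h.congr_fun (fun x hx => rpow_smul_rpow_div_one_add_rpow_two hx) measurableSet_Ioi

lemma integral_rpow_div_one_add_sq (hα : -1 < α) (hα' : α < 1) :
    ∫ x in Ioi (0 : ℝ), x ^ α / (1 + x ^ 2) = π / (2 * cos (α * π / 2)) := by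
  have h := integral_comp_rpow_Ioi_of_pos (p := 2) two_pos
    (g := fun t : ℝ => t ^ ((α + 1) / 2 - 1) / (1 + t))
  rw [integral_rpow_div_one_add (by linarith) (by linarith),
    show π * ((α + 1) / 2) = α * π / 2 + π / 2 by ring, sin_add_pi_div_two,
    setIntegral_congr_fun measurableSet_Ioi fun x (hx : 0 < x) => by
      rw [mul_smul, rpow_smul_rpow_div_one_add_rpow_two hx],
    integral_smul, smul_eq_mul] at h
  rw [mul_comm 2, ← div_div, ← h]
  ring

lemma integrable_abs_rpow_div_one_add_sq (hα : -1 < α) (hα' : α < 1) :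
    Integrable fun y : ℝ => |y| ^ α / (1 + y ^ 2) := by
  simpa only [sq_abs] using integrable_comp_abs (integrableOn_rpow_div_one_add_sq hα hα')

lemma integral_abs_rpow_div_one_add_sq (hα : -1 < α) (hα' : α < 1) :
    ∫ y : ℝ, |y| ^ α / (1 + y ^ 2) = π / cos (α * π / 2) := by
  have h := integral_comp_abs (f := fun x => x ^ α / (1 + x ^ 2))
  simp only [sq_abs] at h
  rw [h, integral_rpow_div_one_add_sq hα hα']
  field_simp

lemma abs_rpow_mul_poisson_eq {ε : ℝ} (hε : 0 < ε) (y : ℝ) :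
    |y| ^ α * (ε / (ε ^ 2 + y ^ 2)) = ε ^ (α - 1) * (|y / ε| ^ α / (1 + (y / ε) ^ 2)) := by
  rw [abs_div, abs_of_pos hε, div_rpow (abs_nonneg y) hε.le, rpow_sub_one hε.ne']
  have : 0 < ε ^ α := rpow_pos_of_pos hε α
  field_simp

end

/-- The `α`-th absolute moment of the Poisson kernel: for `α ∈ [0,1)` and
`ε > 0`, the function `y ↦ |y|^α ε/(ε²+y²)` is integrable on `ℝ` and
`(1/π) ∫ ε|y|^α/(ε²+y²) dy = sec(απ/2) ε^α`. -/
theorem stmt_17 (α : ℝ) (hα0 : 0 ≤ α) (hα1 : α < 1) (ε : ℝ) (hε : 0 < ε) :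
    Integrable (fun y : ℝ => |y| ^ α * (ε / (ε ^ 2 + y ^ 2))) ∧
    (1 / π) * (∫ y : ℝ, ε * |y| ^ α / (ε ^ 2 + y ^ 2)) =
      (1 / Real.cos (α * π / 2)) * ε ^ α := by
  have hα : -1 < α := by linarith
  have hcos : cos (α * π / 2) ≠ 0 :=
    (cos_pos_of_mem_Ioo ⟨by nlinarith [pi_pos], by nlinarith [pi_pos]⟩).ne'
  have hscale := funext (abs_rpow_mul_poisson_eq (α := α) hε)
  have hint := integrable_abs_rpow_div_one_add_sq hα hα1
  refine ⟨hscale ▸ (hint.comp_div hε.ne').const_mul _, ?_⟩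
  calc (1 / π) * ∫ y : ℝ, ε * |y| ^ α / (ε ^ 2 + y ^ 2)
      = (1 / π) * ∫ y : ℝ, ε ^ (α - 1) * (|y / ε| ^ α / (1 + (y / ε) ^ 2)) := by
        rw [← hscale]
        congr 2 with y
        ring
    _ = (1 / π) * (ε ^ (α - 1) * (ε * (π / cos (α * π / 2)))) := by
        rw [integral_const_mul, Measure.integral_comp_div (fun x => |x| ^ α / (1 + x ^ 2)),
          integral_abs_rpow_div_one_add_sq hα hα1, abs_of_pos hε, smul_eq_mul]
    _ = (1 / cos (α * π / 2)) * ε ^ α := by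
        rw [rpow_sub_one hε.ne']
        field_simp
end

section
/- There is no mth order kernel of order m ≥ 3 that is non-negative almost everywhere: if m ≥ 3 and K ∈ L¹(ℝ) satisfies ∫_ℝ K(x) dx = 1, ∫_ℝ K(x)x^j dx = 0 for 0 < j < m (with x ↦ K(x)x^j integrable), and |K(x)| ≤ C_K/(1+|x|)^{m+1} for all x, then K(x) < 0 on a set of positive Lebesgue measure. -/
open MeasureTheory Real Set

/- A non-negative kernel has non-negative second moment, with equality only if it vanishes
almost everywhere; so the vanishing second moment of a kernel of order `m ≥ 3` would force
`∫ K = 0`, contradicting `∫ K = 1`. -/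

theorem ae_eq_zero_of_integral_mul_sq_eq_zero {μ : Measure ℝ} [NullSingletonClass μ] {f : ℝ → ℝ}
    (hf : 0 ≤ᵐ[μ] f) (hint : Integrable (fun x => f x * x ^ 2) μ)
    (h : ∫ x, f x * x ^ 2 ∂μ = 0) : f =ᵐ[μ] 0 := by
  have hnonneg : 0 ≤ᵐ[μ] fun x => f x * x ^ 2 :=
    hf.mono fun x hx => mul_nonneg hx (sq_nonneg x)
  have hprod : (fun x => f x * x ^ 2) =ᵐ[μ] 0 :=
    (integral_eq_zero_iff_of_nonneg_ae hnonneg hint).mp h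
  filter_upwards [hprod, compl_mem_ae_iff.mpr (measure_singleton (0 : ℝ))] with x hx hx0
  exact (mul_eq_zero.mp hx).resolve_right (pow_ne_zero 2 hx0)

theorem stmt_18_general (m : ℕ) (hm : 3 ≤ m) (K : ℝ → ℝ)
    (hone : (∫ x, K x) = 1)
    (hmom_int : ∀ j : ℕ, 0 < j → j < m → Integrable (fun x => K x * x ^ j))
    (hmom : ∀ j : ℕ, 0 < j → j < m → (∫ x, K x * x ^ j) = 0) :
    0 < volume {x : ℝ | K x < 0} := by
  by_contra! h
  have hK_nonneg : 0 ≤ᵐ[volume] K := by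
    rw [Filter.EventuallyLE, ae_iff]
    simpa only [Pi.zero_apply, not_le] using nonpos_iff_eq_zero.mp h
  have hK_zero : K =ᵐ[volume] 0 :=
    ae_eq_zero_of_integral_mul_sq_eq_zero hK_nonneg (hmom_int 2 two_pos (by omega))
      (hmom 2 two_pos (by omega))
  have hint_zero : (∫ x, K x) = 0 := by simp [integral_congr_ae hK_zero]
  exact one_ne_zero (hone.symm.trans hint_zero)

/-- No kernel of order `m ≥ 3` is non-negative almost everywhere: if `K ∈ L¹(ℝ)`
satisfies `∫ K = 1`, has vanishing moments `∫ K(x)x^j dx = 0` for `0 < j < m`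
(with `x ↦ K(x)x^j` integrable), and `|K(x)| ≤ C_K/(1+|x|)^{m+1}`, then `K < 0`
on a set of positive Lebesgue measure. -/
theorem stmt_18 (m : ℕ) (hm : 3 ≤ m) (CK : ℝ) (K : ℝ → ℝ)
    (hint : Integrable K) (hone : (∫ x, K x) = 1)
    (hmom_int : ∀ j : ℕ, 0 < j → j < m → Integrable (fun x => K x * x ^ j))
    (hmom : ∀ j : ℕ, 0 < j → j < m → (∫ x, K x * x ^ j) = 0)
    (hdecay : ∀ x : ℝ, |K x| ≤ CK / (1 + |x|) ^ (m + 1)) :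
    0 < volume {x : ℝ | K x < 0} :=
  stmt_18_general m hm K hone hmom_int hmom
end

section
/- Let μ be a Borel probability measure on ℝ that is absolutely continuous on the interval I = (x₀−η, x₀+η) for some x₀ ∈ ℝ and η > 0, with density ρ on I that is Lipschitz continuous on I (i.e. ρ ∈ C^{0,1}(I)). Let μ^ε denote the Poisson-smoothed measure. Then |ρ(x₀) − μ^ε(x₀)| = O(ε log(1/ε)) as ε ↓ 0; that is, there exist C > 0 and ε₀ ∈ (0,1) such that |ρ(x₀) − μ^ε(x₀)| ≤ C ε log(1/ε) for all 0 < ε < ε₀. -/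
/-!
With `K(y) = ε / (ε² + (x₀ - y)²)`, whose integral over `ℝ` is `π`, and `I = (x₀ - η, x₀ + η)`,
`π (ρ(x₀) - μ^ε(x₀)) = ρ(x₀) (π - ∫_I K) + ∫_I (ρ(x₀) - ρ(y)) K(y) dy - ∫_{ℝ \ I} K dμ`.
The first term is `2 ρ(x₀) arctan(ε/η) = O(ε)`, and the last is at most `ε/η²` because `K ≤ ε/η²`
off `I` and `μ` has mass one. The Lipschitz bound controls the middle term by
`L ∫_{-η}^{η} ε|t| / (ε² + t²) dt = L ε log(1 + η²/ε²)`, which is where the logarithm comes from.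
-/

open MeasureTheory Real Set

/-- The Poisson kernel of the upper half-plane without its factor `1 / π`
(Mathlib's `poissonKernel` is the one of a disc). -/
noncomputable def realPoissonKernel (ε x y : ℝ) : ℝ := ε / (ε ^ 2 + (x - y) ^ 2)

section RealPoissonKernel

variable {ε : ℝ}

lemma realPoissonKernel_nonneg (hε : 0 ≤ ε) (x y : ℝ) : 0 ≤ realPoissonKernel ε x y := by
  unfold realPoissonKernel; positivity

lemma realPoissonKernel_le (hε : 0 < ε) (x y : ℝ) : realPoissonKernel ε x y ≤ 1 / ε := by
  rw [realPoissonKernel, div_le_div_iff₀ (by positivity) hε]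
  nlinarith [sq_nonneg (x - y)]

lemma continuous_realPoissonKernel (hε : 0 < ε) (x : ℝ) : Continuous (realPoissonKernel ε x) :=
  continuous_const.div (by fun_prop) fun y => by positivity

lemma integrable_realPoissonKernel (μ : Measure ℝ) [IsFiniteMeasure μ] (hε : 0 < ε) (x : ℝ) :
    Integrable (realPoissonKernel ε x) μ :=
  (integrable_const (1 / ε)).mono' (continuous_realPoissonKernel hε x).aestronglyMeasurable
    (ae_of_all _ fun y => by
      rw [norm_of_nonneg (realPoissonKernel_nonneg hε.le x y)]
      exact realPoissonKernel_le hε x y)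

lemma hasDerivAt_arctan_sub_div (hε : 0 < ε) (x y : ℝ) :
    HasDerivAt (fun y => arctan ((y - x) / ε)) (realPoissonKernel ε x y) y := by
  have h := (hasDerivAt_arctan _).comp y (((hasDerivAt_id y).sub_const x).div_const ε)
  refine h.congr_deriv ?_
  have : ε ^ 2 + (x - y) ^ 2 ≠ 0 := by positivity
  simp only [realPoissonKernel, id]
  field_simp
  ring

lemma hasDerivAt_log_sq_add_sq (hε : 0 < ε) (x y : ℝ) :
    HasDerivAt (fun y => ε / 2 * log (ε ^ 2 + (x - y) ^ 2))
      ((y - x) * realPoissonKernel ε x y) y := by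
  have hpos : ε ^ 2 + (x - y) ^ 2 ≠ 0 := by positivity
  have hq : HasDerivAt (fun y => ε ^ 2 + (x - y) ^ 2) (2 * (x - y) ^ 1 * -1) y :=
    (((hasDerivAt_id y).const_sub x).pow 2).const_add (ε ^ 2)
  have h := (hq.log hpos).const_mul (ε / 2)
  refine h.congr_deriv ?_
  simp only [realPoissonKernel]
  field_simp
  ring

lemma integral_realPoissonKernel_Ioo (hε : 0 < ε) (x : ℝ) {η : ℝ} (hη : 0 ≤ η) :
    ∫ y in Ioo (x - η) (x + η), realPoissonKernel ε x y = 2 * arctan (η / ε) := by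
  rw [← integral_Ioc_eq_integral_Ioo, ← intervalIntegral.integral_of_le (by linarith),
    intervalIntegral.integral_eq_sub_of_hasDerivAt (fun y _ => hasDerivAt_arctan_sub_div hε x y)
      ((continuous_realPoissonKernel hε x).intervalIntegrable _ _)]
  rw [show (x + η - x) / ε = η / ε by ring, show (x - η - x) / ε = -(η / ε) by ring, arctan_neg]
  ring

lemma pi_sub_integral_realPoissonKernel_Ioo_mem (hε : 0 < ε) (x : ℝ) {η : ℝ} (hη : 0 < η) :
    π - ∫ y in Ioo (x - η) (x + η), realPoissonKernel ε x y ∈ Icc 0 (2 * ε / η) := by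
  have harctan : 0 ≤ arctan (ε / η) := arctan_nonneg.mpr (by positivity)
  have hle : arctan (ε / η) ≤ ε / η := by
    simpa only [tan_arctan] using le_tan harctan (arctan_lt_pi_div_two _)
  have hcompl : π - 2 * arctan (η / ε) = 2 * arctan (ε / η) := by
    rw [← inv_div, arctan_inv_of_pos (by positivity)]; ring
  rw [integral_realPoissonKernel_Ioo hε x hη.le, hcompl]
  constructor <;> linarith [show 2 * (ε / η) = 2 * ε / η by ring]

lemma integral_abs_sub_mul_realPoissonKernel_Ioo (hε : 0 < ε) (x : ℝ) {η : ℝ} (hη : 0 ≤ η) :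
    ∫ y in Ioo (x - η) (x + η), |x - y| * realPoissonKernel ε x y =
      ε * (log (ε ^ 2 + η ^ 2) - log (ε ^ 2)) := by
  have hK := continuous_realPoissonKernel hε x
  have hc : Continuous fun y => |x - y| * realPoissonKernel ε x y := by fun_prop
  have hc' : Continuous fun y => (y - x) * realPoissonKernel ε x y := by fun_prop
  have hF := hasDerivAt_log_sq_add_sq hε x
  have hleft : ∫ y in (x - η)..x, |x - y| * realPoissonKernel ε x y =
      ∫ y in (x - η)..x, -((y - x) * realPoissonKernel ε x y) := by
    refine intervalIntegral.integral_congr fun y hy => ?_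
    rw [uIcc_of_le (by linarith), mem_Icc] at hy
    rw [abs_of_nonneg (by linarith)]; ring
  have hright : ∫ y in x..(x + η), |x - y| * realPoissonKernel ε x y =
      ∫ y in x..(x + η), (y - x) * realPoissonKernel ε x y := by
    refine intervalIntegral.integral_congr fun y hy => ?_
    rw [uIcc_of_le (by linarith), mem_Icc] at hy
    rw [abs_of_nonpos (by linarith)]; ring
  rw [← integral_Ioc_eq_integral_Ioo, ← intervalIntegral.integral_of_le (by linarith),
    ← intervalIntegral.integral_add_adjacent_intervals (hc.intervalIntegrable _ x)
      (hc.intervalIntegrable x _), hleft, hright, intervalIntegral.integral_neg,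
    intervalIntegral.integral_eq_sub_of_hasDerivAt (fun y _ => hF y) (hc'.intervalIntegrable _ _),
    intervalIntegral.integral_eq_sub_of_hasDerivAt (fun y _ => hF y) (hc'.intervalIntegrable _ _)]
  simp only [sub_self, sub_sub_cancel, sub_add_cancel_left, neg_sq, ne_eq, OfNat.ofNat_ne_zero,
    not_false_eq_true, zero_pow, add_zero]
  ring

lemma integrableOn_realPoissonKernel_Ioo (hε : 0 < ε) (x a b : ℝ) :
    IntegrableOn (realPoissonKernel ε x) (Ioo a b) :=
  ((continuous_realPoissonKernel hε x).integrableOn_Icc).mono_set Ioo_subset_Icc_self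

lemma abs_setIntegral_sub_mul_realPoissonKernel_le (hε : 0 < ε) {f : ℝ → ℝ} {x η L : ℝ}
    (hη : 0 ≤ η) (hf : ∀ y ∈ Ioo (x - η) (x + η), |f x - f y| ≤ L * |x - y|) :
    |∫ y in Ioo (x - η) (x + η), (f x - f y) * realPoissonKernel ε x y| ≤
      L * (ε * (log (ε ^ 2 + η ^ 2) - log (ε ^ 2))) := by
  have hc : Continuous fun y => |x - y| * realPoissonKernel ε x y := by
    have := continuous_realPoissonKernel hε x; fun_prop
  rw [← integral_abs_sub_mul_realPoissonKernel_Ioo hε x hη, ← integral_const_mul,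
    ← Real.norm_eq_abs]
  refine norm_integral_le_of_norm_le
    ((hc.integrableOn_Icc.mono_set Ioo_subset_Icc_self).const_mul L)
    (ae_restrict_of_forall_mem measurableSet_Ioo fun y hy => ?_)
  rw [norm_mul, Real.norm_eq_abs, norm_of_nonneg (realPoissonKernel_nonneg hε.le x y), ← mul_assoc]
  exact mul_le_mul_of_nonneg_right (hf y hy) (realPoissonKernel_nonneg hε.le x y)

lemma abs_setIntegral_compl_realPoissonKernel_le (μ : Measure ℝ) [IsProbabilityMeasure μ]
    (hε : 0 ≤ ε) (x : ℝ) {η : ℝ} (hη : 0 < η) :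
    |∫ y in (Ioo (x - η) (x + η))ᶜ, realPoissonKernel ε x y ∂μ| ≤ ε / η ^ 2 := by
  have hbound : ∀ y ∈ (Ioo (x - η) (x + η))ᶜ, ‖realPoissonKernel ε x y‖ ≤ ε / η ^ 2 := by
    intro y hy
    have hfar : η ^ 2 ≤ (x - y) ^ 2 := by
      simp only [mem_compl_iff, mem_Ioo, not_and, not_lt] at hy
      rcases le_or_gt y (x - η) with h | h
      · nlinarith
      · nlinarith [hy h]
    rw [norm_of_nonneg (realPoissonKernel_nonneg hε x y)]
    exact div_le_div_of_nonneg_left hε (by positivity) (by nlinarith)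
  calc |∫ y in (Ioo (x - η) (x + η))ᶜ, realPoissonKernel ε x y ∂μ|
      ≤ ε / η ^ 2 * μ.real (Ioo (x - η) (x + η))ᶜ :=
        norm_setIntegral_le_of_norm_le_const (measure_lt_top _ _) hbound
    _ ≤ ε / η ^ 2 := mul_le_of_le_one_right (by positivity) measureReal_le_one

end RealPoissonKernel

lemma ACOnWithDensity.setIntegral_eq {μ : Measure ℝ} {I : Set ℝ} {ρ : ℝ → ℝ}
    (h : ACOnWithDensity μ I ρ) (hI : MeasurableSet I) (f : ℝ → ℝ) :
    ∫ y in I, f y ∂μ = ∫ y in I, ρ y * f y := by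
  obtain ⟨hρ_nonneg, hρ_int, hμ⟩ := h
  rw [hμ, integral_withDensity_eq_integral_toReal_smul₀
    hρ_int.aestronglyMeasurable.aemeasurable.ennreal_ofReal
    (ae_of_all _ fun _ => ENNReal.ofReal_lt_top)]
  refine setIntegral_congr_fun hI fun y hy => ?_
  rw [ENNReal.toReal_ofReal (hρ_nonneg y hy), smul_eq_mul]

lemma poissonSmooth_eq_integral_realPoissonKernel_div (μ : Measure ℝ) (ε x : ℝ) :
    poissonSmooth μ ε x = (∫ y, realPoissonKernel ε x y ∂μ) / π := by
  rw [poissonSmooth, one_div_mul_eq_div]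
  rfl

lemma pi_mul_sub_integral_realPoissonKernel_eq (μ : Measure ℝ) [IsFiniteMeasure μ]
    {x η ε : ℝ} {ρ : ℝ → ℝ} (hε : 0 < ε) (hac : ACOnWithDensity μ (Ioo (x - η) (x + η)) ρ) :
    π * ρ x - ∫ y, realPoissonKernel ε x y ∂μ =
      ρ x * (π - ∫ y in Ioo (x - η) (x + η), realPoissonKernel ε x y)
        + (∫ y in Ioo (x - η) (x + η), (ρ x - ρ y) * realPoissonKernel ε x y)
        - ∫ y in (Ioo (x - η) (x + η))ᶜ, realPoissonKernel ε x y ∂μ := by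
  have hK := integrableOn_realPoissonKernel_Ioo hε x (x - η) (x + η)
  have hρK : IntegrableOn (fun y => ρ y * realPoissonKernel ε x y) (Ioo (x - η) (x + η)) :=
    hac.2.1.mul_bdd (continuous_realPoissonKernel hε x).aestronglyMeasurable
      (ae_of_all _ fun y => by
        rw [norm_of_nonneg (realPoissonKernel_nonneg hε.le x y)]
        exact realPoissonKernel_le hε x y)
  have hdev : ∫ y in Ioo (x - η) (x + η), (ρ x - ρ y) * realPoissonKernel ε x y =
      ρ x * (∫ y in Ioo (x - η) (x + η), realPoissonKernel ε x y)
        - ∫ y in Ioo (x - η) (x + η), ρ y * realPoissonKernel ε x y := by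
    simp_rw [sub_mul]
    rw [integral_sub (hK.const_mul _) hρK, integral_const_mul]
  rw [← integral_add_compl measurableSet_Ioo (integrable_realPoissonKernel μ hε x),
    hac.setIntegral_eq measurableSet_Ioo, hdev]
  ring

lemma abs_sub_poissonSmooth_le (μ : Measure ℝ) [IsProbabilityMeasure μ] {x η ε L : ℝ}
    {ρ : ℝ → ℝ} (hη : 0 < η) (hε : 0 < ε) (hac : ACOnWithDensity μ (Ioo (x - η) (x + η)) ρ)
    (hlip : ∀ y ∈ Ioo (x - η) (x + η), |ρ x - ρ y| ≤ L * |x - y|) :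
    |ρ x - poissonSmooth μ ε x| ≤
      (|ρ x| * (2 * ε / η) + L * (ε * (log (ε ^ 2 + η ^ 2) - log (ε ^ 2))) + ε / η ^ 2) / π := by
  have hmissing : |ρ x * (π - ∫ y in Ioo (x - η) (x + η), realPoissonKernel ε x y)| ≤
      |ρ x| * (2 * ε / η) := by
    obtain ⟨h0, h1⟩ := pi_sub_integral_realPoissonKernel_Ioo_mem hε x hη
    rw [abs_mul, abs_of_nonneg h0]
    exact mul_le_mul_of_nonneg_left h1 (abs_nonneg _)
  have hinner := abs_setIntegral_sub_mul_realPoissonKernel_le hε hη.le hlip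
  have htail := abs_setIntegral_compl_realPoissonKernel_le μ hε.le x hη
  have hsmooth : ρ x - poissonSmooth μ ε x = (π * ρ x - ∫ y, realPoissonKernel ε x y ∂μ) / π := by
    rw [poissonSmooth_eq_integral_realPoissonKernel_div]
    field_simp
  rw [hsmooth, abs_div, abs_of_pos pi_pos, pi_mul_sub_integral_realPoissonKernel_eq μ hε hac]
  gcongr
  exact (abs_sub _ _).trans (add_le_add ((abs_add_le _ _).trans (add_le_add hmissing hinner)) htail)

lemma log_sq_add_sq_sub_log_sq_le {ε : ℝ} (η : ℝ) (hε : 0 < ε) (hε₁ : ε < 1) :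
    log (ε ^ 2 + η ^ 2) - log (ε ^ 2) ≤ log (1 + η ^ 2) + 2 * log (1 / ε) := by
  have hnum : log (ε ^ 2 + η ^ 2) ≤ log (1 + η ^ 2) :=
    log_le_log (by positivity) (by nlinarith)
  have hden : log (ε ^ 2) = -(2 * log (1 / ε)) := by
    rw [log_pow, one_div, log_inv]; push_cast; ring
  linarith

lemma exists_le_mul_mul_log_inv_of_le {f : ℝ → ℝ} {A B : ℝ} (hA : 0 ≤ A) (hB : 0 ≤ B)
    (hf : ∀ ε, 0 < ε → ε < 1 → f ε ≤ A * ε + B * (ε * log (1 / ε))) :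
    ∃ C > (0 : ℝ), ∃ ε₀ ∈ Ioo (0 : ℝ) 1, ∀ ε, 0 < ε → ε < ε₀ →
      f ε ≤ C * (ε * log (1 / ε)) := by
  have he : exp (-1) < 1 := exp_lt_one_iff.mpr (by norm_num)
  refine ⟨A + B + 1, by positivity, exp (-1), ⟨exp_pos _, he⟩, fun ε hε hε₀ => ?_⟩
  have hlog : 1 ≤ log (1 / ε) := by
    rw [one_div, log_inv, le_neg, log_le_iff_le_exp hε]
    exact hε₀.le
  have hε_le : ε ≤ ε * log (1 / ε) := le_mul_of_one_le_right hε.le hlog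
  calc f ε ≤ A * ε + B * (ε * log (1 / ε)) := hf ε hε (hε₀.trans he)
    _ ≤ A * (ε * log (1 / ε)) + B * (ε * log (1 / ε)) + 1 * (ε * log (1 / ε)) := by
      linarith [mul_le_mul_of_nonneg_left hε_le hA]
    _ = (A + B + 1) * (ε * log (1 / ε)) := by ring

/-- If `μ` is a Borel probability measure on `ℝ`, absolutely continuous on
`I = (x₀−η, x₀+η)` with Lipschitz density `ρ ∈ C^{0,1}(I)`, then the Poisson
smoothed measure satisfies `|ρ(x₀) − μ^ε(x₀)| = O(ε log(1/ε))` as `ε ↓ 0`. -/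
theorem stmt_19 (μ : Measure ℝ) [IsProbabilityMeasure μ] (x₀ η : ℝ) (hη : 0 < η)
    (ρ : ℝ → ℝ)
    (hac : ACOnWithDensity μ (Ioo (x₀ - η) (x₀ + η)) ρ)
    (hlip : ∃ L : ℝ, 0 ≤ L ∧ ∀ x ∈ Ioo (x₀ - η) (x₀ + η), ∀ y ∈ Ioo (x₀ - η) (x₀ + η),
      |ρ x - ρ y| ≤ L * |x - y|) :
    ∃ C > (0 : ℝ), ∃ ε₀ ∈ Set.Ioo (0 : ℝ) 1, ∀ ε : ℝ, 0 < ε → ε < ε₀ →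
      |ρ x₀ - poissonSmooth μ ε x₀| ≤ C * (ε * Real.log (1 / ε)) := by
  obtain ⟨L, hL, hlip⟩ := hlip
  have hx₀ : x₀ ∈ Ioo (x₀ - η) (x₀ + η) := ⟨by linarith, by linarith⟩
  refine exists_le_mul_mul_log_inv_of_le
    (A := (|ρ x₀| * (2 / η) + L * log (1 + η ^ 2) + 1 / η ^ 2) / π) (B := 2 * L / π)
    (by have := log_nonneg (by nlinarith : (1 : ℝ) ≤ 1 + η ^ 2); positivity) (by positivity)
    fun ε hε hε₁ => ?_
  calc |ρ x₀ - poissonSmooth μ ε x₀|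
      ≤ (|ρ x₀| * (2 * ε / η) + L * (ε * (log (ε ^ 2 + η ^ 2) - log (ε ^ 2))) + ε / η ^ 2) / π :=
        abs_sub_poissonSmooth_le μ hη hε hac (hlip x₀ hx₀)
    _ ≤ (|ρ x₀| * (2 * ε / η) + L * (ε * (log (1 + η ^ 2) + 2 * log (1 / ε))) + ε / η ^ 2) / π := by
        gcongr
        exact log_sq_add_sq_sub_log_sq_le η hε hε₁
    _ = _ := by ring
end
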